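/- arXiv:1206.0082 — 11 statements merged into one kernel-verified Lean document; each statement's English description precedes it below -/
import Mathlib

section
/- Let k and ℓ be positive integers and let S_{k,ℓ} be the double star graph. Then there is no perfect state transfer on S_{k,ℓ}: for every pair of distinct vertices a, b of S_{k,ℓ} and every real time τ, perfect state transfer from a to b at time τ does not occur. -/
open Matrix

noncomputable section

/-- Vertex set of the double star `S_{k,ℓ}`: `Sum.inl 0` is the centre `u`,
`Sum.inl 1` the centre `v`, `Sum.inr (Sum.inl i)` are the pendant neighbours of `u`,
and `Sum.inr (Sum.inr j)` are the pendant neighbours of `v`. -/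
abbrev DSVertex (k l : ℕ) := (Fin 2) ⊕ (Fin k ⊕ Fin l)

/-- The double star graph `S_{k,ℓ}`: the centres `u = Sum.inl 0` and `v = Sum.inl 1` are
adjacent, `u` is adjacent to its `k` pendant vertices and `v` to its `ℓ` pendant vertices. -/
def doubleStar (k l : ℕ) : SimpleGraph (DSVertex k l) :=
  SimpleGraph.fromRel (fun a b =>
    (a = Sum.inl 0 ∧ b = Sum.inl 1) ∨
    (∃ i : Fin k, a = Sum.inl 0 ∧ b = Sum.inr (Sum.inl i)) ∨
    (∃ j : Fin l, a = Sum.inl 1 ∧ b = Sum.inr (Sum.inr j)))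

instance (k l : ℕ) : DecidableRel (doubleStar k l).Adj := fun _ _ => Classical.dec _

/-- The continuous quantum walk `U(t) = exp(itA)`. -/
def qWalk {n : Type*} [Fintype n] [DecidableEq n] (A : Matrix n n ℂ) (t : ℝ) :
    Matrix n n ℂ :=
  NormedSpace.exp ((Complex.I * (t : ℂ)) • A)

/-- Perfect state transfer from `a` to `b` at time `τ` for the quantum walk of `A`:
`U(τ) e_a = γ e_b` for some `γ` with `|γ| = 1`. -/
def IsPST {n : Type*} [Fintype n] [DecidableEq n] (A : Matrix n n ℂ) (a b : n) (τ : ℝ) :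
    Prop :=
  ∃ γ : ℂ, ‖γ‖ = 1 ∧ (qWalk A τ).mulVec (Pi.single a 1) = γ • (Pi.single b 1 : n → ℂ)

/-!
Since the walk matrix `U(τ) = exp(iτA)` is symmetric, pairing `U(τ) e_a = γ e_b` with a real
eigenvector `f` of eigenvalue `c` gives `e^{iτc} f(a) = γ f(b)`, and hence `|f(a)| = |f(b)|`.
The nonzero eigenvalues of `S_{k,ℓ}` are `±θ, ±μ`, where `θ² ≠ μ²` are the roots of
`(x - k)(x - ℓ) = x`, with explicit eigenvectors, and `e_x - e_y` lies in the kernel whenever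
`x, y` are leaves at the same centre. Comparing absolute values rules out every pair except the
two centres, which forces `k = ℓ`, and pairs of leaves. The kernel vectors reduce the leaf pairs
to two leaves at a centre of degree three (then `γ = -1`) or to the path `S_{1,1}`. In the
remaining cases the phases would make `τ/π` an odd integer with `τ(θ + μ) ∈ 2πℤ` and
`(θ + μ)² = 4k + 1`, or `τθ/π` and `τμ/π` odd integers with `θ² + μ² = ℓ + 3` and
`θ²μ² = 2ℓ`; both contradict parity.
-/

open Complex ComplexConjugate
open scoped Real

namespace Matrix

variable {n : Type*} [Fintype n] [DecidableEq n]

theorem exp_mulVec_of_mulVec_eq_smul {M : Matrix n n ℂ} {w : n → ℂ} {c : ℂ}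
    (h : M *ᵥ w = c • w) : NormedSpace.exp M *ᵥ w = Complex.exp c • w := by
  let _ : NormedRing (Matrix n n ℂ) := Matrix.linftyOpNormedRing
  let _ : NormedAlgebra ℂ (Matrix n n ℂ) := Matrix.linftyOpNormedAlgebra
  have hpow (p : ℕ) : M ^ p *ᵥ w = c ^ p • w := by
    induction p with
    | zero => simp
    | succ p ih => rw [pow_succ, ← mulVec_mulVec, h, mulVec_smul, ih, smul_smul, pow_succ']
  let L : Matrix n n ℂ →L[ℂ] n → ℂ := LinearMap.toContinuousLinearMap
    { toFun := (· *ᵥ w), map_add' := (add_mulVec · · w), map_smul' := (smul_mulVec · · w) }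
  have hL := (NormedSpace.exp_series_hasSum_exp' (𝕂 := ℂ) M).mapL L
  have hc := (NormedSpace.exp_series_hasSum_exp' (𝕂 := ℂ) c).smul_const w
  simp only [smul_eq_mul, ← smul_smul, ← hpow] at hc
  rw [← Complex.exp_eq_exp_ℂ] at hc
  exact hL.unique (by simpa [L, smul_mulVec] using hc)

theorem mulVec_single_sub_single_eq_zero {R : Type*} [Ring R] {A : Matrix n n R} {x y : n}
    (h : A.col x = A.col y) : A *ᵥ (Pi.single x 1 - Pi.single y 1) = 0 := by
  rw [mulVec_sub, mulVec_single_one, mulVec_single_one, h, sub_self]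

end Matrix

theorem SimpleGraph.map_ofReal_adjMatrix {V : Type*} (G : SimpleGraph V) [DecidableRel G.Adj] :
    (G.adjMatrix ℝ).map ofReal = G.adjMatrix ℂ := by
  ext x y
  by_cases hxy : G.Adj x y <;> simp [hxy]

variable {n : Type*} [Fintype n]

theorem qWalk_transpose [DecidableEq n] {A : Matrix n n ℂ} (hA : Aᵀ = A) (τ : ℝ) :
    (qWalk A τ)ᵀ = qWalk A τ := by
  rw [qWalk, ← Matrix.exp_transpose, transpose_smul, hA]

theorem qWalk_map_ofReal_mulVec [DecidableEq n] {A : Matrix n n ℝ} {f : n → ℝ} {c : ℝ} (τ : ℝ)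
    (h : A *ᵥ f = c • f) :
    qWalk (A.map ofReal) τ *ᵥ (ofReal ∘ f) = exp (I * τ * c) • (ofReal ∘ f) := by
  have hC : A.map ofReal *ᵥ (ofReal ∘ f) = (c : ℂ) • (ofReal ∘ f) := by
    ext i
    simpa [mulVec, dotProduct] using congrArg ofReal (congrFun h i)
  apply Matrix.exp_mulVec_of_mulVec_eq_smul
  rw [smul_mulVec, hC, smul_smul]

/-- What `U(τ) e_a = γ e_b` says when paired with a real eigenvector of a real symmetric `A`. -/
def PSTEigenCondition (A : Matrix n n ℝ) (a b : n) (τ : ℝ) (γ : ℂ) : Prop :=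
  ∀ (f : n → ℝ) (c : ℝ), A *ᵥ f = c • f → exp (I * τ * c) * f a = γ * f b

theorem IsPST.exists_pstEigenCondition [DecidableEq n] {A : Matrix n n ℝ} (hA : Aᵀ = A)
    {a b : n} {τ : ℝ} (h : IsPST (A.map ofReal) a b τ) :
    ∃ γ : ℂ, ‖γ‖ = 1 ∧ PSTEigenCondition A a b τ γ := by
  obtain ⟨γ, hγ, hU⟩ := h
  refine ⟨γ, hγ, fun f c hf => ?_⟩
  have hAC : (A.map ofReal)ᵀ = A.map ofReal := by rw [← transpose_map, hA]
  have := congrArg ((ofReal ∘ f) ⬝ᵥ ·) hU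
  rw [dotProduct_mulVec, ← qWalk_transpose hAC, vecMul_transpose,
    qWalk_map_ofReal_mulVec τ hf] at this
  simpa [mul_comm] using this

namespace PSTEigenCondition

variable {A : Matrix n n ℝ} {a b : n} {τ : ℝ} {γ : ℂ}

theorem symm (hγ : ‖γ‖ = 1) (h : PSTEigenCondition A a b τ γ) :
    PSTEigenCondition A b a τ γ := by
  intro f c hf
  have hconj := congrArg conj (h f c hf)
  simp only [map_mul, conj_ofReal] at hconj
  have hE : conj (exp (I * τ * c)) * exp (I * τ * c) = 1 := by
    rw [conj_mul', mul_assoc, ← ofReal_mul, norm_exp_I_mul_ofReal]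
    simp
  have hγ' : conj γ * γ = 1 := by rw [conj_mul', hγ]; simp
  linear_combination (-exp (I * τ * c) * f b) * hγ' - (exp (I * τ * c) * γ) * hconj
    + (γ * f a) * hE

theorem sq_eq (hγ : ‖γ‖ = 1) (h : PSTEigenCondition A a b τ γ) {f : n → ℝ} {c : ℝ}
    (hf : A *ᵥ f = c • f) : f a ^ 2 = f b ^ 2 := by
  have := congrArg norm (h f c hf)
  rw [norm_mul, norm_mul, hγ, mul_assoc, ← ofReal_mul, norm_exp_I_mul_ofReal, norm_real,
    norm_real, one_mul, one_mul] at this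
  exact (sq_eq_sq_iff_abs_eq_abs _ _).mpr this

theorem apply_eq_of_mulVec_eq_zero (h : PSTEigenCondition A a b τ γ) {f : n → ℝ}
    (hf : A *ᵥ f = 0) : (f a : ℂ) = γ * f b := by
  simpa using h f 0 (by simpa using hf)

theorem eq_of_col_eq [DecidableEq n] (h : PSTEigenCondition A a b τ γ) (hab : a ≠ b) {x : n}
    (hxa : x ≠ a) (hx : A.col x = A.col a) : x = b := by
  by_contra hxb
  have := h.apply_eq_of_mulVec_eq_zero (mulVec_single_sub_single_eq_zero hx.symm)
  simp [hab, Ne.symm hxa, Ne.symm hxb] at this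

theorem eq_neg_one_of_col_eq [DecidableEq n] (h : PSTEigenCondition A a b τ γ) (hab : a ≠ b)
    (hx : A.col a = A.col b) : γ = -1 := by
  have : (1 : ℂ) = γ * -1 := by
    simpa [hab, Ne.symm hab] using
      h.apply_eq_of_mulVec_eq_zero (mulVec_single_sub_single_eq_zero hx)
  linear_combination this

end PSTEigenCondition

section DoubleStar

variable {k l : ℕ}

theorem doubleStar_adj_iff {x y : DSVertex k l} : (doubleStar k l).Adj x y ↔
    (x = .inl 0 ∧ y = .inl 1) ∨ (x = .inl 1 ∧ y = .inl 0) ∨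
    (∃ i, x = .inl 0 ∧ y = .inr (.inl i)) ∨ (∃ i, x = .inr (.inl i) ∧ y = .inl 0) ∨
    (∃ j, x = .inl 1 ∧ y = .inr (.inr j)) ∨ (∃ j, x = .inr (.inr j) ∧ y = .inl 1) := by
  rw [doubleStar, SimpleGraph.fromRel_adj]
  aesop

theorem doubleStar_adjMatrix_col_inr_inl (i j : Fin k) :
    ((doubleStar k l).adjMatrix ℝ).col (.inr (.inl i)) =
      ((doubleStar k l).adjMatrix ℝ).col (.inr (.inl j)) := by
  ext x
  simp [SimpleGraph.adjMatrix_apply, doubleStar_adj_iff]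

theorem doubleStar_adjMatrix_col_inr_inr (i j : Fin l) :
    ((doubleStar k l).adjMatrix ℝ).col (.inr (.inr i)) =
      ((doubleStar k l).adjMatrix ℝ).col (.inr (.inr j)) := by
  ext x
  simp [SimpleGraph.adjMatrix_apply, doubleStar_adj_iff]

def doubleStarEigenvector (k l : ℕ) (t : ℝ) : DSVertex k l → ℝ :=
  Sum.elim ![t ^ 2, t * (t ^ 2 - k)] (Sum.elim (fun _ => t) (fun _ => t ^ 2 - k))

variable (k l) in
@[simp] theorem doubleStarEigenvector_inl_zero (t : ℝ) :
    doubleStarEigenvector k l t (.inl 0) = t ^ 2 := rfl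

variable (l) in
@[simp] theorem doubleStarEigenvector_inl_one (t : ℝ) :
    doubleStarEigenvector k l t (.inl 1) = t * (t ^ 2 - k) := rfl

variable (l) in
@[simp] theorem doubleStarEigenvector_inr_inl (t : ℝ) (i : Fin k) :
    doubleStarEigenvector k l t (.inr (.inl i)) = t := rfl

variable (l) in
@[simp] theorem doubleStarEigenvector_inr_inr (t : ℝ) (j : Fin l) :
    doubleStarEigenvector k l t (.inr (.inr j)) = t ^ 2 - k := rfl

theorem doubleStar_adjMatrix_mulVec_eigenvector {t : ℝ}
    (ht : (t ^ 2 - k) * (t ^ 2 - l) = t ^ 2) :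
    (doubleStar k l).adjMatrix ℝ *ᵥ doubleStarEigenvector k l t =
      t • doubleStarEigenvector k l t := by
  ext x
  simp only [mulVec, dotProduct, SimpleGraph.adjMatrix_apply, ite_mul, one_mul, zero_mul,
    Fintype.sum_sum_type, Fin.sum_univ_two]
  rcases x with i | i | j
  · fin_cases i
    · simp [doubleStar_adj_iff]
      ring
    · simp [doubleStar_adj_iff]
      linear_combination -ht
  · simp [doubleStar_adj_iff]
    ring
  · simp [doubleStar_adj_iff]

theorem exists_doubleStar_eigenvalues (hk : 0 < k) (hl : 0 < l) :
    ∃ θ μ : ℝ, 0 < μ ∧ μ < θ ∧ (θ ^ 2 - k) * (θ ^ 2 - l) = θ ^ 2 ∧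
      (μ ^ 2 - k) * (μ ^ 2 - l) = μ ^ 2 := by
  have hkl : (0 : ℝ) < k * l := by positivity
  have hd : 0 < (k + l + 1 : ℝ) ^ 2 - 4 * (k * l) := by nlinarith [sq_nonneg ((k : ℝ) - l)]
  set s := √((k + l + 1 : ℝ) ^ 2 - 4 * (k * l))
  have hs : s ^ 2 = (k + l + 1 : ℝ) ^ 2 - 4 * (k * l) := Real.sq_sqrt hd.le
  have hs0 : 0 < s := Real.sqrt_pos.mpr hd
  have hsK : s < k + l + 1 := by nlinarith
  -- `θ²` and `μ²` are the roots `(k + ℓ + 1 ± s) / 2` of `x² - (k + ℓ + 1) x + k ℓ`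
  have hp : √((k + l + 1 + s) / 2) ^ 2 = (k + l + 1 + s) / 2 := Real.sq_sqrt (by positivity)
  have hq : √((k + l + 1 - s) / 2) ^ 2 = (k + l + 1 - s) / 2 := Real.sq_sqrt (by linarith)
  refine ⟨√((k + l + 1 + s) / 2), √((k + l + 1 - s) / 2), Real.sqrt_pos.mpr (by linarith),
    Real.sqrt_lt_sqrt (by linarith) (by linarith), ?_, ?_⟩
  · rw [hp]; linear_combination hs / 4
  · rw [hq]; linear_combination hs / 4

theorem sq_add_sq_eq_of_roots {θ μ : ℝ} (hθ : (θ ^ 2 - k) * (θ ^ 2 - l) = θ ^ 2)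
    (hμ : (μ ^ 2 - k) * (μ ^ 2 - l) = μ ^ 2) (hne : θ ^ 2 ≠ μ ^ 2) :
    θ ^ 2 + μ ^ 2 = k + l + 1 :=
  mul_left_cancel₀ (sub_ne_zero.mpr hne) (by linear_combination hθ - hμ)

end DoubleStar

theorem exists_int_of_exp_I_mul_eq_one {x : ℝ} (h : exp (I * x) = 1) :
    ∃ n : ℤ, x = n * (2 * π) := by
  obtain ⟨n, hn⟩ := exp_eq_one_iff.mp h
  refine ⟨n, ofReal_injective (mul_left_cancel₀ I_ne_zero ?_)⟩
  push_cast
  linear_combination hn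

theorem exists_odd_of_exp_I_mul_eq_neg_one {x : ℝ} (h : exp (I * x) = -1) :
    ∃ n : ℤ, Odd n ∧ x = n * π := by
  obtain ⟨n, hn⟩ := exists_int_of_exp_I_mul_eq_one (x := x - π) <| by
    rw [ofReal_sub, mul_sub, exp_sub, h, mul_comm, exp_pi_mul_I, div_self (by norm_num)]
  exact ⟨2 * n + 1, odd_two_mul_add_one n, by push_cast; linarith⟩

theorem two_mul_sq_add_sq_sq_ne {A B : ℤ} (hA : Odd A) (hB : Odd B) (m : ℤ) :
    2 * m * (A ^ 2 + B ^ 2) ^ 2 ≠ (m + 3) ^ 2 * (A * B) ^ 2 := by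
  intro h
  -- the left side is `8 m Y²` with `Y` odd
  obtain ⟨Y, hY, hAB⟩ : ∃ Y : ℤ, Odd Y ∧ A ^ 2 + B ^ 2 = 2 * Y := by
    obtain ⟨a, rfl⟩ := hA
    obtain ⟨b, rfl⟩ := hB
    exact ⟨2 * (a ^ 2 + a + b ^ 2 + b) + 1, odd_two_mul_add_one _, by ring⟩
  have hX : Odd ((A * B) ^ 2) := (hA.mul hB).pow
  rw [hAB] at h
  rcases Int.even_or_odd m with ⟨s, rfl⟩ | ⟨s, rfl⟩
  · have hodd : Odd ((s + s + 3) ^ 2 * (A * B) ^ 2) := (Odd.pow ⟨s + 1, by ring⟩).mul hX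
    exact Int.not_even_iff_odd.mpr hodd (h ▸ ⟨(s + s) * (2 * Y) ^ 2, by ring⟩)
  · have h' : 2 * (2 * s + 1) * Y ^ 2 = (s + 2) ^ 2 * (A * B) ^ 2 :=
      mul_left_cancel₀ four_ne_zero (by linear_combination h)
    rcases Int.even_or_odd s with ⟨r, rfl⟩ | hs
    · have h'' : (4 * r + 1) * Y ^ 2 = 2 * ((r + 1) ^ 2 * (A * B) ^ 2) :=
        mul_left_cancel₀ two_ne_zero (by linear_combination h')
      exact Int.not_even_iff_odd.mpr (Odd.mul ⟨2 * r, by ring⟩ hY.pow) (h'' ▸ even_two_mul _)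
    · have hodd : Odd ((s + 2) ^ 2 * (A * B) ^ 2) := (hs.add_even even_two).pow.mul hX
      exact Int.not_even_iff_odd.mpr hodd (h' ▸ ⟨(2 * s + 1) * Y ^ 2, by ring⟩)

theorem odd_mul_ne_two_mul {s : ℝ} {k : ℕ} (hs : s ^ 2 = 4 * k + 1) {n : ℤ} (hn : Odd n)
    (m : ℤ) : n * s ≠ 2 * m := by
  intro hns
  -- squaring makes the odd number `n² (4k + 1)` equal to the even number `4 m²`
  have hZ : n ^ 2 * (4 * k + 1) = 4 * m ^ 2 := by
    have : (n : ℝ) ^ 2 * (4 * k + 1) = 4 * m ^ 2 := by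
      rw [← hs]; linear_combination (n * s + 2 * m) * hns
    exact_mod_cast this
  have hodd : Odd (n ^ 2 * (4 * k + 1)) := hn.pow.mul ⟨2 * k, by ring⟩
  rw [hZ] at hodd
  exact Int.not_even_iff_odd.mpr hodd ⟨2 * m ^ 2, by ring⟩

theorem not_forall_exp_mul_eq_mul_sq_sub {k : ℕ} (hk : 0 < k) (τ : ℝ) (γ : ℂ) :
    ¬ ∀ t : ℝ, (t ^ 2 - k) ^ 2 = t ^ 2 → exp (I * τ * t) * t = γ * ↑(t ^ 2 - k) := by
  intro h
  set s := √(4 * k + 1)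
  have hs : s ^ 2 = 4 * k + 1 := Real.sq_sqrt (by positivity)
  have hs1 : 1 < s := by
    rw [show (1 : ℝ) = √1 by simp]
    exact Real.sqrt_lt_sqrt zero_le_one (by norm_cast; omega)
  obtain ⟨θ, μ, hdiff, hsum, hθ, hμ, hθ0, hμ0⟩ : ∃ θ μ : ℝ, θ = μ + 1 ∧ s = θ + μ ∧
      θ ^ 2 - k = θ ∧ μ ^ 2 - k = -μ ∧ (θ : ℂ) ≠ 0 ∧ (μ : ℂ) ≠ 0 :=
    ⟨(s + 1) / 2, (s - 1) / 2, by ring, by ring, by linear_combination hs / 4,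
      by linear_combination hs / 4, by exact_mod_cast (by positivity : (s + 1) / 2 ≠ 0),
      by exact_mod_cast (by linarith : (s - 1) / 2 ≠ 0)⟩
  have e₁ : exp (I * τ * θ) = γ := by
    have := h θ (by rw [hθ])
    rw [hθ] at this
    exact mul_right_cancel₀ hθ0 this
  have e₂ : exp (-(I * τ * θ)) = -γ := by
    have := h (-θ) (by rw [neg_sq, hθ])
    rw [neg_sq, hθ, ofReal_neg, mul_neg, mul_neg] at this
    exact mul_right_cancel₀ hθ0 (by linear_combination -this)
  have e₃ : exp (I * τ * μ) = -γ := by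
    have := h μ (by rw [hμ, neg_sq])
    rw [hμ, ofReal_neg] at this
    exact mul_right_cancel₀ hμ0 (by linear_combination this)
  have hγ : γ * -γ = 1 := by
    rw [← e₂, ← e₁, ← exp_add, add_neg_cancel, exp_zero]
  have hτ : exp (I * τ) = -1 := by
    have : exp (I * τ * θ) = exp (I * τ * μ) * exp (I * τ) := by
      rw [← exp_add, hdiff]; push_cast; ring_nf
    rw [e₁, e₃] at this
    exact mul_left_cancel₀ (left_ne_zero_of_mul_eq_one hγ) (by linear_combination this)
  have hτs : exp (I * ↑(τ * s)) = 1 := by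
    rw [hsum, ← hγ, ← e₃, ← e₁, ← exp_add]; push_cast; ring_nf
  obtain ⟨n, hn, hτn⟩ := exists_odd_of_exp_I_mul_eq_neg_one hτ
  obtain ⟨m, hm⟩ := exists_int_of_exp_I_mul_eq_one hτs
  exact odd_mul_ne_two_mul hs hn m
    (mul_right_cancel₀ Real.pi_ne_zero (by rw [hτn] at hm; linear_combination hm))

theorem not_forall_exp_eq_neg_one {m : ℕ} (hm : 0 < m) (τ : ℝ) :
    ¬ ∀ t : ℝ, (t ^ 2 - 2) * (t ^ 2 - m) = t ^ 2 → exp (I * τ * t) = -1 := by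
  intro h
  obtain ⟨θ, μ, hμ, hμθ, hθ, hμ'⟩ := exists_doubleStar_eigenvalues two_pos hm
  have hsum := sq_add_sq_eq_of_roots hθ hμ' (pow_lt_pow_left₀ hμθ hμ.le two_ne_zero).ne'
  push_cast at hθ hμ' hsum
  have hprod : θ ^ 2 * μ ^ 2 = 2 * m := by linear_combination θ ^ 2 * hsum - hθ
  obtain ⟨A, hA, hτθ⟩ := exists_odd_of_exp_I_mul_eq_neg_one (x := τ * θ)
    (by rw [ofReal_mul, ← mul_assoc]; exact h θ hθ)
  obtain ⟨B, hB, hτμ⟩ := exists_odd_of_exp_I_mul_eq_neg_one (x := τ * μ)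
    (by rw [ofReal_mul, ← mul_assoc]; exact h μ hμ')
  have hAB : (A : ℝ) * μ = B * θ :=
    mul_right_cancel₀ Real.pi_ne_zero (by linear_combination θ * hτμ - μ * hτθ)
  have e₁ : θ ^ 2 * (A ^ 2 + B ^ 2) = A ^ 2 * (m + 3) := by
    linear_combination A ^ 2 * hsum - (A * μ + B * θ) * hAB
  have e₂ : μ ^ 2 * (A ^ 2 + B ^ 2) = B ^ 2 * (m + 3) := by
    linear_combination B ^ 2 * hsum + (A * μ + B * θ) * hAB
  have : (2 * m * (A ^ 2 + B ^ 2) ^ 2 : ℝ) = (m + 3) ^ 2 * (A * B) ^ 2 := by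
    linear_combination -(A ^ 2 + B ^ 2 : ℝ) ^ 2 * hprod + (μ ^ 2 * (A ^ 2 + B ^ 2)) * e₁
      + (A ^ 2 * (m + 3)) * e₂
  exact two_mul_sq_add_sq_sq_ne hA hB m (by exact_mod_cast this)

section DoubleStarPST

variable {k l : ℕ} {τ : ℝ} {γ : ℂ}

theorem PSTEigenCondition.exists_doubleStar_sq_eq (hk : 0 < k) (hl : 0 < l) (hγ : ‖γ‖ = 1)
    {a b : DSVertex k l} (h : PSTEigenCondition ((doubleStar k l).adjMatrix ℝ) a b τ γ) :
    ∃ θ μ : ℝ, 0 < μ ∧ μ < θ ∧ (θ ^ 2 - k) * (θ ^ 2 - l) = θ ^ 2 ∧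
      (μ ^ 2 - k) * (μ ^ 2 - l) = μ ^ 2 ∧
      doubleStarEigenvector k l θ a ^ 2 = doubleStarEigenvector k l θ b ^ 2 ∧
      doubleStarEigenvector k l μ a ^ 2 = doubleStarEigenvector k l μ b ^ 2 := by
  obtain ⟨θ, μ, hμ, hμθ, hθ, hμ'⟩ := exists_doubleStar_eigenvalues hk hl
  exact ⟨θ, μ, hμ, hμθ, hθ, hμ', h.sq_eq hγ (doubleStar_adjMatrix_mulVec_eigenvector hθ),
    h.sq_eq hγ (doubleStar_adjMatrix_mulVec_eigenvector hμ')⟩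

theorem not_pstEigenCondition_inl_zero_inl_one (hk : 0 < k) (hl : 0 < l) (hγ : ‖γ‖ = 1) :
    ¬ PSTEigenCondition ((doubleStar k l).adjMatrix ℝ) (.inl 0) (.inl 1) τ γ := by
  intro h
  obtain ⟨θ, μ, hμ, hμθ, hθ, hμ', eθ, eμ⟩ := h.exists_doubleStar_sq_eq hk hl hγ
  rw [doubleStarEigenvector_inl_zero, doubleStarEigenvector_inl_one] at eθ eμ
  have hne : θ ^ 2 ≠ μ ^ 2 := (pow_lt_pow_left₀ hμθ hμ.le two_ne_zero).ne'
  have sθ : θ ^ 2 = (θ ^ 2 - k) ^ 2 :=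
    mul_left_cancel₀ (pow_pos (hμ.trans hμθ) 2).ne' (by linear_combination eθ)
  have sμ : μ ^ 2 = (μ ^ 2 - k) ^ 2 :=
    mul_left_cancel₀ (pow_pos hμ 2).ne' (by linear_combination eμ)
  have hkl : k = l := by
    have h₁ : θ ^ 2 + μ ^ 2 = 2 * k + 1 :=
      mul_left_cancel₀ (sub_ne_zero.mpr hne) (by linear_combination sμ - sθ)
    have h₂ := sq_add_sq_eq_of_roots hθ hμ' hne
    exact_mod_cast (by linarith : (k : ℝ) = l)
  subst hkl
  refine not_forall_exp_mul_eq_mul_sq_sub hk τ γ fun t ht => ?_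
  have ht0 : (t : ℂ) ≠ 0 := by
    rintro ht0
    rw [ofReal_eq_zero.mp ht0] at ht
    exact hk.ne' (by simpa using ht)
  have := h _ _ (doubleStar_adjMatrix_mulVec_eigenvector (by rw [← sq]; exact ht))
  rw [doubleStarEigenvector_inl_zero, doubleStarEigenvector_inl_one] at this
  push_cast at this ⊢
  exact mul_left_cancel₀ ht0 (by linear_combination this)

theorem not_pstEigenCondition_inl_zero_inr_inl (hk : 0 < k) (hl : 0 < l) (hγ : ‖γ‖ = 1)
    (i : Fin k) :
    ¬ PSTEigenCondition ((doubleStar k l).adjMatrix ℝ) (.inl 0) (.inr (.inl i)) τ γ := by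
  intro h
  obtain ⟨θ, μ, hμ, hμθ, -, -, eθ, eμ⟩ := h.exists_doubleStar_sq_eq hk hl hγ
  rw [doubleStarEigenvector_inl_zero, doubleStarEigenvector_inr_inl] at eθ eμ
  have sθ : θ ^ 2 = 1 :=
    mul_left_cancel₀ (pow_pos (hμ.trans hμθ) 2).ne' (by linear_combination eθ)
  have sμ : μ ^ 2 = 1 := mul_left_cancel₀ (pow_pos hμ 2).ne' (by linear_combination eμ)
  nlinarith

theorem not_pstEigenCondition_inl_zero_inr_inr (hk : 0 < k) (hl : 0 < l) (hγ : ‖γ‖ = 1)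
    (j : Fin l) :
    ¬ PSTEigenCondition ((doubleStar k l).adjMatrix ℝ) (.inl 0) (.inr (.inr j)) τ γ := by
  intro h
  obtain ⟨θ, μ, hμ, hμθ, -, -, eθ, eμ⟩ := h.exists_doubleStar_sq_eq hk hl hγ
  rw [doubleStarEigenvector_inl_zero, doubleStarEigenvector_inr_inr] at eθ eμ
  have hk0 : (k : ℝ) ≠ 0 := by positivity
  have sθ : 2 * θ ^ 2 = k := mul_left_cancel₀ hk0 (by linear_combination eθ)
  have sμ : 2 * μ ^ 2 = k := mul_left_cancel₀ hk0 (by linear_combination eμ)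
  nlinarith

theorem not_pstEigenCondition_inl_one_inr_inl (hk : 0 < k) (hl : 0 < l) (hγ : ‖γ‖ = 1)
    (i : Fin k) :
    ¬ PSTEigenCondition ((doubleStar k l).adjMatrix ℝ) (.inl 1) (.inr (.inl i)) τ γ := by
  intro h
  obtain ⟨θ, μ, hμ, hμθ, hθ, -, eθ, eμ⟩ := h.exists_doubleStar_sq_eq hk hl hγ
  rw [doubleStarEigenvector_inl_one, doubleStarEigenvector_inr_inl] at eθ eμ
  have sθ : (θ ^ 2 - k) ^ 2 = 1 :=
    mul_left_cancel₀ (pow_pos (hμ.trans hμθ) 2).ne' (by linear_combination eθ)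
  have sμ : (μ ^ 2 - k) ^ 2 = 1 :=
    mul_left_cancel₀ (pow_pos hμ 2).ne' (by linear_combination eμ)
  -- `θ² - k` and `μ² - k` are `±1` with opposite signs, so `θ² - k = 1`, and then the root
  -- equation reads `θ² - ℓ = θ²`
  have hlt : μ ^ 2 < θ ^ 2 := pow_lt_pow_left₀ hμθ hμ.le two_ne_zero
  have hsum : θ ^ 2 + μ ^ 2 = 2 * k :=
    mul_left_cancel₀ (sub_ne_zero.mpr hlt.ne') (by linear_combination sθ - sμ)
  have hθk : θ ^ 2 - k = 1 := by nlinarith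
  rw [hθk] at hθ
  exact hl.ne' (by exact_mod_cast (by linarith : (l : ℝ) = 0))

theorem not_pstEigenCondition_inl_one_inr_inr (hk : 0 < k) (hl : 0 < l) (hγ : ‖γ‖ = 1)
    (j : Fin l) :
    ¬ PSTEigenCondition ((doubleStar k l).adjMatrix ℝ) (.inl 1) (.inr (.inr j)) τ γ := by
  intro h
  obtain ⟨θ, μ, hμ, hμθ, hθ, hμ', eθ, eμ⟩ := h.exists_doubleStar_sq_eq hk hl hγ
  rw [doubleStarEigenvector_inl_one, doubleStarEigenvector_inr_inr] at eθ eμ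
  -- a root `t ≠ 0` has `t² ≠ k`, so the equation forces `t² = 1`
  have sθ : θ ^ 2 = 1 := by
    have hθk : (θ ^ 2 - k) ^ 2 ≠ 0 := pow_ne_zero 2 fun h0 => by
      rw [h0, zero_mul] at hθ; nlinarith
    exact mul_left_cancel₀ hθk (by linear_combination eθ)
  have sμ : μ ^ 2 = 1 := by
    have hμk : (μ ^ 2 - k) ^ 2 ≠ 0 := pow_ne_zero 2 fun h0 => by
      rw [h0, zero_mul] at hμ'; nlinarith
    exact mul_left_cancel₀ hμk (by linear_combination eμ)
  nlinarith

theorem not_pstEigenCondition_inr_inl_inr_inl (hl : 0 < l) {i j : Fin k} (hij : i ≠ j) :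
    ¬ PSTEigenCondition ((doubleStar k l).adjMatrix ℝ) (.inr (.inl i)) (.inr (.inl j)) τ γ := by
  intro h
  have hab : (.inr (.inl i) : DSVertex k l) ≠ .inr (.inl j) := by simpa using hij
  have hγ : γ = -1 := h.eq_neg_one_of_col_eq hab (doubleStar_adjMatrix_col_inr_inl i j)
  have hk : k = 2 := by
    simpa using (Nat.card_eq_two_iff' i).mpr ⟨j, hij.symm, fun x hxi => by
      simpa using h.eq_of_col_eq hab (by simpa using hxi) (doubleStar_adjMatrix_col_inr_inl x i)⟩
  subst hk
  refine not_forall_exp_eq_neg_one hl τ fun t ht => ?_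
  have ht0 : (t : ℂ) ≠ 0 := by
    rintro ht0
    rw [ofReal_eq_zero.mp ht0] at ht
    exact hl.ne' (by simpa using ht)
  have := h _ _ (doubleStar_adjMatrix_mulVec_eigenvector (by exact_mod_cast ht))
  rw [doubleStarEigenvector_inr_inl, doubleStarEigenvector_inr_inl, hγ] at this
  exact mul_right_cancel₀ ht0 (by linear_combination this)

theorem not_pstEigenCondition_inr_inr_inr_inr (hk : 0 < k) {i j : Fin l} (hij : i ≠ j) :
    ¬ PSTEigenCondition ((doubleStar k l).adjMatrix ℝ) (.inr (.inr i)) (.inr (.inr j)) τ γ := by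
  intro h
  have hab : (.inr (.inr i) : DSVertex k l) ≠ .inr (.inr j) := by simpa using hij
  have hγ : γ = -1 := h.eq_neg_one_of_col_eq hab (doubleStar_adjMatrix_col_inr_inr i j)
  have hl : l = 2 := by
    simpa using (Nat.card_eq_two_iff' i).mpr ⟨j, hij.symm, fun x hxi => by
      simpa using h.eq_of_col_eq hab (by simpa using hxi) (doubleStar_adjMatrix_col_inr_inr x i)⟩
  subst hl
  refine not_forall_exp_eq_neg_one hk τ fun t ht => ?_
  have htk : t ^ 2 - k ≠ 0 := fun htk => by
    rw [htk, mul_zero] at ht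
    exact hk.ne' (by exact_mod_cast (by linarith : (k : ℝ) = 0))
  have := h _ _ (doubleStar_adjMatrix_mulVec_eigenvector (t := t) (by linear_combination ht))
  rw [doubleStarEigenvector_inr_inr, doubleStarEigenvector_inr_inr, hγ] at this
  exact mul_right_cancel₀ (ofReal_ne_zero.mpr htk) (by linear_combination this)

theorem not_pstEigenCondition_inr_inl_inr_inr (hγ : ‖γ‖ = 1) (i : Fin k) (j : Fin l) :
    ¬ PSTEigenCondition ((doubleStar k l).adjMatrix ℝ) (.inr (.inl i)) (.inr (.inr j)) τ γ := by
  intro h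
  have hab : (.inr (.inl i) : DSVertex k l) ≠ .inr (.inr j) := by simp
  have hk : k = 1 := by
    simpa using Fintype.card_eq_one_iff.mpr ⟨i, fun x => by_contra fun hxi => by
      simpa using h.eq_of_col_eq hab (by simpa using hxi) (doubleStar_adjMatrix_col_inr_inl x i)⟩
  have hl : l = 1 := by
    simpa using Fintype.card_eq_one_iff.mpr ⟨j, fun y => by_contra fun hyj => by
      simpa using (h.symm hγ).eq_of_col_eq hab.symm (by simpa using hyj)
        (doubleStar_adjMatrix_col_inr_inr y j)⟩
  subst hk hl
  refine not_forall_exp_mul_eq_mul_sq_sub one_pos τ γ fun t ht => ?_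
  simpa using h _ _ (doubleStar_adjMatrix_mulVec_eigenvector (by rw [← sq]; exact ht))

theorem not_pstEigenCondition_doubleStar (hk : 0 < k) (hl : 0 < l) {a b : DSVertex k l}
    (hab : a ≠ b) (hγ : ‖γ‖ = 1) :
    ¬ PSTEigenCondition ((doubleStar k l).adjMatrix ℝ) a b τ γ := by
  intro h
  match a, b, hab, h with
  | .inl 0, .inl 0, hab, _ => exact hab rfl
  | .inl 1, .inl 1, hab, _ => exact hab rfl
  | .inl 0, .inl 1, _, h => exact not_pstEigenCondition_inl_zero_inl_one hk hl hγ h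
  | .inl 1, .inl 0, _, h => exact not_pstEigenCondition_inl_zero_inl_one hk hl hγ (h.symm hγ)
  | .inl 0, .inr (.inl i), _, h => exact not_pstEigenCondition_inl_zero_inr_inl hk hl hγ i h
  | .inr (.inl i), .inl 0, _, h =>
    exact not_pstEigenCondition_inl_zero_inr_inl hk hl hγ i (h.symm hγ)
  | .inl 0, .inr (.inr j), _, h => exact not_pstEigenCondition_inl_zero_inr_inr hk hl hγ j h
  | .inr (.inr j), .inl 0, _, h =>
    exact not_pstEigenCondition_inl_zero_inr_inr hk hl hγ j (h.symm hγ)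
  | .inl 1, .inr (.inl i), _, h => exact not_pstEigenCondition_inl_one_inr_inl hk hl hγ i h
  | .inr (.inl i), .inl 1, _, h =>
    exact not_pstEigenCondition_inl_one_inr_inl hk hl hγ i (h.symm hγ)
  | .inl 1, .inr (.inr j), _, h => exact not_pstEigenCondition_inl_one_inr_inr hk hl hγ j h
  | .inr (.inr j), .inl 1, _, h =>
    exact not_pstEigenCondition_inl_one_inr_inr hk hl hγ j (h.symm hγ)
  | .inr (.inl i), .inr (.inl j), hab, h =>
    exact not_pstEigenCondition_inr_inl_inr_inl hl (by simpa using hab) h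
  | .inr (.inr i), .inr (.inr j), hab, h =>
    exact not_pstEigenCondition_inr_inr_inr_inr hk (by simpa using hab) h
  | .inr (.inl i), .inr (.inr j), _, h => exact not_pstEigenCondition_inr_inl_inr_inr hγ i j h
  | .inr (.inr j), .inr (.inl i), _, h =>
    exact not_pstEigenCondition_inr_inl_inr_inr hγ i j (h.symm hγ)

end DoubleStarPST

/-- there is no perfect state transfer on the double star `S_{k,ℓ}`. -/
theorem no_pst_doubleStar (k l : ℕ) (hk : 0 < k) (hl : 0 < l)
    (a b : DSVertex k l) (hab : a ≠ b) (τ : ℝ) :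
    ¬ IsPST ((doubleStar k l).adjMatrix ℂ) a b τ := by
  intro hpst
  rw [← SimpleGraph.map_ofReal_adjMatrix] at hpst
  obtain ⟨γ, hγ, h⟩ := hpst.exists_pstEigenCondition (SimpleGraph.transpose_adjMatrix _)
  exact not_pstEigenCondition_doubleStar hk hl hab hγ h
end
end

section
/- Let ℓ be a positive integer, let S_{2,ℓ} be the double star graph, and let u₁ and u₂ be the two vertices of degree one adjacent to the center u of degree three. Then there is pretty good state transfer from u₁ to u₂ in S_{2,ℓ} if and only if ℓ ≠ 2. -/
open Matrix

noncomputable section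

/-- Pretty good state transfer from `a` to `b` for the quantum walk of `A`: there is `γ`
with `|γ| = 1` such that `U(t) e_a` gets arbitrarily close to `γ e_b`. -/
def IsPGST {n : Type*} [Fintype n] [DecidableEq n] (A : Matrix n n ℂ) (a b : n) : Prop :=
  ∃ γ : ℂ, ‖γ‖ = 1 ∧ ∀ ε : ℝ, 0 < ε → ∃ t : ℝ,
    ‖(qWalk A t).mulVec (Pi.single a 1) - γ • (Pi.single b 1 : n → ℂ)‖ < ε

/-!
The vector `e_{u₁} - e_{u₂}` is a `0`-eigenvector, so it is fixed by the walk, while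
`e_{u₁} + e_{u₂}` lies in the span of eigenvectors for `±θ₁, ±θ₂`, the roots of
`θ⁴ - (ℓ + 3) θ² + 2ℓ`. Hence `U(t) e_{u₁} + e_{u₂}` is small exactly when `e^{itθ₁}` and
`e^{itθ₂}` are both close to `-1`. For `ℓ ≠ 2` the discriminant `(ℓ - 1)² + 8` is not a square,
so `θ₂ / θ₁` is irrational and a Kronecker-type density argument brings both phases to `-1`.
For `ℓ = 2` the roots are `2` and `1`, and the `(u₂, u₁)` entry of `U(t)`,
`-1/2 + cos (2t) / 6 + cos t / 3`, stays in `[-3/4, 0]`.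
-/

open Complex

theorem Matrix.exp_mulVec_of_mulVec_eq_smul_s1 {n : Type*} [Fintype n] [DecidableEq n]
    {M : Matrix n n ℂ} {c : ℂ} {v : n → ℂ} (h : M *ᵥ v = c • v) :
    NormedSpace.exp M *ᵥ v = cexp c • v := by
  let : NormedRing (Matrix n n ℂ) := Matrix.linftyOpNormedRing
  let : NormedAlgebra ℂ (Matrix n n ℂ) := Matrix.linftyOpNormedAlgebra
  have hpow (k : ℕ) : M ^ k *ᵥ v = c ^ k • v := by
    induction k with
    | zero => simp
    | succ k ih => rw [pow_succ, ← mulVec_mulVec, h, mulVec_smul, ih, smul_smul, ← pow_succ']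
  have hM := (NormedSpace.exp_series_hasSum_exp' (𝕂 := ℂ) M).map
    (AddMonoidHom.mk' (· *ᵥ v) fun A B => add_mulVec A B v)
    (continuous_id.matrix_mulVec continuous_const)
  have hc := (NormedSpace.exp_series_hasSum_exp' (𝕂 := ℂ) c).smul_const v
  simp only [Function.comp_def, AddMonoidHom.mk'_apply, smul_mulVec, hpow, smul_smul] at hM
  rw [exp_eq_exp_ℂ]
  exact hM.unique hc

theorem qWalk_mulVec_of_mulVec_eq_smul {n : Type*} [Fintype n] [DecidableEq n]
    {A : Matrix n n ℂ} {c : ℂ} {v : n → ℂ} (h : A *ᵥ v = c • v) (t : ℝ) :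
    qWalk A t *ᵥ v = cexp (I * t * c) • v :=
  Matrix.exp_mulVec_of_mulVec_eq_smul_s1 (by rw [smul_mulVec, h, smul_smul])

theorem IsPGST.exists_lt_norm_qWalk_mulVec_apply {n : Type*} [Fintype n] [DecidableEq n]
    {A : Matrix n n ℂ} {a b : n} (h : IsPGST A a b) {ε : ℝ} (hε : 0 < ε) :
    ∃ t : ℝ, 1 - ε < ‖(qWalk A t *ᵥ Pi.single a 1) b‖ := by
  obtain ⟨γ, hγ, hclose⟩ := h
  obtain ⟨t, ht⟩ := hclose ε hε
  refine ⟨t, ?_⟩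
  have hb := (norm_le_pi_norm (qWalk A t *ᵥ Pi.single a 1 - γ • Pi.single b 1) b).trans_lt ht
  simp only [Pi.sub_apply, Pi.smul_apply, Pi.single_eq_same, smul_eq_mul, mul_one] at hb
  linarith [norm_sub_norm_le γ ((qWalk A t *ᵥ Pi.single a 1) b),
    norm_sub_rev γ ((qWalk A t *ᵥ Pi.single a 1) b)]

theorem exists_exp_eq_neg_one_and_norm_exp_add_one_lt {θ₁ θ₂ : ℝ} (hθ₁ : θ₁ ≠ 0)
    (hirr : Irrational (θ₂ / θ₁)) {δ : ℝ} (hδ : 0 < δ) :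
    ∃ t : ℝ, cexp (I * t * θ₁) = -1 ∧ ‖cexp (I * t * θ₂) + 1‖ < δ := by
  set α := θ₂ / θ₁
  have hdense : Dense (AddSubgroup.closure {2 * α, 2} : Set ℝ) :=
    dense_addSubgroupClosure_pair_iff.2 (by simpa using hirr)
  obtain ⟨y, hy, hyα⟩ := hdense.exists_dist_lt (1 - α) (div_pos hδ Real.pi_pos)
  obtain ⟨m, n, rfl⟩ := AddSubgroup.mem_closure_pair.1 hy
  -- `(2m + 1) α` lies within `δ / π` of the odd integer `1 - 2n`
  set r := (2 * m + 1) * α - (2 * (-n) + 1 : ℤ)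
  have hr : |r| < δ / Real.pi := by
    rw [Real.dist_eq, abs_sub_comm] at hyα
    convert hyα using 2
    simp only [r, zsmul_eq_mul]
    push_cast
    ring
  have hθ₁' : (θ₁ : ℂ) ≠ 0 := ofReal_ne_zero.2 hθ₁
  refine ⟨(2 * m + 1) * Real.pi / θ₁, ?_, ?_⟩
  · have hodd := exp_mul_I_antiperiodic.odd_zsmul_antiperiodic m 0
    rw [zero_add, zero_mul, exp_zero, zsmul_eq_mul] at hodd
    rw [← hodd]
    congr 1
    push_cast
    field_simp
  · have hodd := exp_mul_I_antiperiodic.odd_zsmul_antiperiodic (-n) (r * Real.pi)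
    have harg : I * ((2 * m + 1) * Real.pi / θ₁ : ℝ) * θ₂ =
        (r * Real.pi + (2 * (-n) + 1 : ℤ) • (Real.pi : ℂ)) * I := by
      simp only [r, α, zsmul_eq_mul]
      push_cast
      field_simp
      ring
    rw [harg, hodd, neg_add_eq_sub, ← norm_neg, neg_sub, mul_comm]
    calc ‖cexp (I * (r * Real.pi)) - 1‖ ≤ ‖r * Real.pi‖ := by
          exact_mod_cast Real.norm_exp_I_mul_ofReal_sub_one_le
      _ < δ := by
          rw [norm_mul, Real.norm_eq_abs, Real.norm_of_nonneg Real.pi_pos.le]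
          exact (lt_div_iff₀ Real.pi_pos).1 hr

theorem Nat.not_isSquare_sq_add_eight {n : ℕ} (hn : n ≠ 1) : ¬ IsSquare (n ^ 2 + 8) := by
  rintro ⟨m, hm⟩
  have hlt : n < m := by nlinarith
  have hlt' : m < n + 3 := by nlinarith
  obtain rfl | rfl : m = n + 1 ∨ m = n + 2 := by omega
  · have : 2 * n + 1 = 8 := by nlinarith
    omega
  · exact hn (by nlinarith)

theorem irrational_div_of_irrational_sq_sub_sq {x y : ℝ} {q : ℚ} (hx : x ≠ 0)
    (hsum : x ^ 2 + y ^ 2 = q) (hdiff : Irrational (x ^ 2 - y ^ 2)) : Irrational (y / x) := by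
  rintro ⟨r, hr⟩
  have hy : y = r * x := by rw [hr, div_mul_cancel₀ _ hx]
  have hr1 : (1 + (r : ℝ) ^ 2) ≠ 0 := by positivity
  refine hdiff ⟨q * (1 - r ^ 2) / (1 + r ^ 2), ?_⟩
  rw [hy] at hsum ⊢
  push_cast
  rw [← hsum]
  field_simp

theorem exists_pos_sq_add_sq_eq_and_sq_mul_sq_eq {s p : ℝ} (hs : 0 < s) (hp : 0 < p)
    (hdisc : 4 * p < s ^ 2) :
    ∃ x y : ℝ, 0 < x ∧ 0 < y ∧ x ^ 2 + y ^ 2 = s ∧ x ^ 2 * y ^ 2 = p ∧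
      x ^ 2 - y ^ 2 = √(s ^ 2 - 4 * p) := by
  set d := √(s ^ 2 - 4 * p)
  have hd : d ^ 2 = s ^ 2 - 4 * p := Real.sq_sqrt (by linarith)
  have hd0 : 0 < d := Real.sqrt_pos.2 (by linarith)
  have hds : d < s := by nlinarith
  refine ⟨√((s + d) / 2), √((s - d) / 2), by positivity, Real.sqrt_pos.2 (by linarith), ?_⟩
  rw [Real.sq_sqrt (by linarith), Real.sq_sqrt (by linarith)]
  refine ⟨by ring, by nlinarith, by ring⟩

theorem exists_roots_irrational_div_of_ne_two {l : ℕ} (hl : 0 < l) (hl2 : l ≠ 2) :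
    ∃ θ₁ θ₂ : ℝ, 0 < θ₁ ∧ 0 < θ₂ ∧ θ₁ ^ 4 + 2 * l = (l + 3) * θ₁ ^ 2 ∧
      θ₂ ^ 4 + 2 * l = (l + 3) * θ₂ ^ 2 ∧ θ₁ ^ 2 ≠ θ₂ ^ 2 ∧ Irrational (θ₂ / θ₁) := by
  obtain ⟨θ₁, θ₂, h₁, h₂, hsum, hprod, hdiff⟩ :=
    exists_pos_sq_add_sq_eq_and_sq_mul_sq_eq (s := l + 3) (p := 2 * l) (by positivity)
      (by positivity) (by nlinarith [sq_nonneg ((l : ℝ) - 1)])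
  have hdisc : ((l : ℝ) + 3) ^ 2 - 4 * (2 * l) = ((l - 1 : ℕ) ^ 2 + 8 : ℕ) := by
    rw [Nat.cast_add, Nat.cast_pow, Nat.cast_sub hl]; push_cast; ring
  have hirr : Irrational (θ₁ ^ 2 - θ₂ ^ 2) := by
    rw [hdiff, hdisc]
    exact irrational_sqrt_natCast_iff.2 (Nat.not_isSquare_sq_add_eight (by omega))
  refine ⟨θ₁, θ₂, h₁, h₂, by linear_combination θ₁ ^ 2 * hsum - hprod,
    by linear_combination θ₂ ^ 2 * hsum - hprod, fun h => ?_,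
    irrational_div_of_irrational_sq_sub_sq (q := l + 3) h₁.ne' (by push_cast; exact hsum) hirr⟩
  rw [h, sub_self] at hirr
  exact hirr ⟨0, by simp⟩

theorem DSVertex.funext {α : Type*} {k l : ℕ} {f g : DSVertex k l → α}
    (h₀ : f (.inl 0) = g (.inl 0)) (h₁ : f (.inl 1) = g (.inl 1))
    (hu : ∀ i, f (.inr (.inl i)) = g (.inr (.inl i)))
    (hv : ∀ j, f (.inr (.inr j)) = g (.inr (.inr j))) : f = g := by
  ext (a | i | j)
  · fin_cases a
    exacts [h₀, h₁]
  · exact hu i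
  · exact hv j

section adjMatrix_mulVec

variable {k l : ℕ} (f : DSVertex k l → ℂ)

theorem doubleStar_adjMatrix_mulVec_inl_zero :
    ((doubleStar k l).adjMatrix ℂ *ᵥ f) (.inl 0) = f (.inl 1) + ∑ i, f (.inr (.inl i)) := by
  simp only [mulVec, dotProduct, Fintype.sum_sum_type, Fin.sum_univ_two,
    SimpleGraph.adjMatrix_apply]
  simp [doubleStar]

theorem doubleStar_adjMatrix_mulVec_inl_one :
    ((doubleStar k l).adjMatrix ℂ *ᵥ f) (.inl 1) = f (.inl 0) + ∑ j, f (.inr (.inr j)) := by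
  simp only [mulVec, dotProduct, Fintype.sum_sum_type, Fin.sum_univ_two,
    SimpleGraph.adjMatrix_apply]
  simp [doubleStar]

theorem doubleStar_adjMatrix_mulVec_inr_inl (i : Fin k) :
    ((doubleStar k l).adjMatrix ℂ *ᵥ f) (.inr (.inl i)) = f (.inl 0) := by
  simp only [mulVec, dotProduct, Fintype.sum_sum_type, Fin.sum_univ_two,
    SimpleGraph.adjMatrix_apply]
  simp [doubleStar]

theorem doubleStar_adjMatrix_mulVec_inr_inr (j : Fin l) :
    ((doubleStar k l).adjMatrix ℂ *ᵥ f) (.inr (.inr j)) = f (.inl 1) := by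
  simp only [mulVec, dotProduct, Fintype.sum_sum_type, Fin.sum_univ_two,
    SimpleGraph.adjMatrix_apply]
  simp [doubleStar]

end adjMatrix_mulVec

def symmVec (k l : ℕ) (θ : ℂ) : DSVertex k l → ℂ
  | .inl 0 => θ
  | .inl 1 => θ ^ 2 - k
  | .inr (.inl _) => 1
  | .inr (.inr _) => (θ ^ 2 - k) / θ

theorem doubleStar_adjMatrix_mulVec_symmVec {k l : ℕ} {θ : ℂ} (hθ : θ ≠ 0)
    (hroot : θ ^ 4 + k * l = (k + l + 1) * θ ^ 2) :
    (doubleStar k l).adjMatrix ℂ *ᵥ symmVec k l θ = θ • symmVec k l θ := by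
  refine DSVertex.funext ?_ ?_ (fun i => ?_) (fun j => ?_) <;>
    simp only [doubleStar_adjMatrix_mulVec_inl_zero, doubleStar_adjMatrix_mulVec_inl_one,
      doubleStar_adjMatrix_mulVec_inr_inl, doubleStar_adjMatrix_mulVec_inr_inr, symmVec,
      Pi.smul_apply, smul_eq_mul, Finset.sum_const, Finset.card_univ, Fintype.card_fin,
      nsmul_eq_mul]
  · ring
  · field_simp
    linear_combination -hroot
  · ring
  · field_simp

theorem doubleStar_adjMatrix_mulVec_single_sub_single {k l : ℕ} (i j : Fin k) :
    (doubleStar k l).adjMatrix ℂ *ᵥ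
      (Pi.single (.inr (.inl i)) 1 - Pi.single (.inr (.inl j)) 1) = 0 := by
  refine DSVertex.funext ?_ ?_ (fun i => ?_) (fun j => ?_) <;>
    simp only [doubleStar_adjMatrix_mulVec_inl_zero, doubleStar_adjMatrix_mulVec_inl_one,
      doubleStar_adjMatrix_mulVec_inr_inl, doubleStar_adjMatrix_mulVec_inr_inr] <;>
    simp [Finset.sum_sub_distrib, Pi.single_apply]

theorem qWalk_mulVec_symmVec_add_symmVec_neg {l : ℕ} {θ : ℂ} (hθ : θ ≠ 0)
    (hroot : θ ^ 4 + 2 * l = (l + 3) * θ ^ 2) (t : ℝ) :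
    qWalk ((doubleStar 2 l).adjMatrix ℂ) t *ᵥ (symmVec 2 l θ + symmVec 2 l (-θ)) =
      cexp (I * t * θ) • symmVec 2 l θ + cexp (I * t * (-θ)) • symmVec 2 l (-θ) := by
  have hroot' (σ : ℂ) (hσ : σ ^ 2 = θ ^ 2) :
      σ ^ 4 + (2 : ℕ) * l = ((2 : ℕ) + l + 1) * σ ^ 2 := by
    push_cast
    linear_combination (σ ^ 2 + θ ^ 2 - l - 3) * hσ + hroot
  rw [mulVec_add,
    qWalk_mulVec_of_mulVec_eq_smul (doubleStar_adjMatrix_mulVec_symmVec hθ (hroot' θ rfl)),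
    qWalk_mulVec_of_mulVec_eq_smul
      (doubleStar_adjMatrix_mulVec_symmVec (neg_ne_zero.2 hθ) (hroot' (-θ) (neg_sq θ)))]

-- `β₁ = symmCoeff θ₁ θ₂` and `β₂ = symmCoeff θ₂ θ₁` solve `2 (β₁ + β₂) = 1` and
-- `β₁ (θ₁² - 2) + β₂ (θ₂² - 2) = 0`, the `u`-pendant and `v` coordinates of the expansion below.
def symmCoeff (θ θ' : ℂ) : ℂ := (2 - θ' ^ 2) / (2 * (θ ^ 2 - θ' ^ 2))

theorem single_add_single_eq_symmVec {l : ℕ} {θ₁ θ₂ : ℂ} (h : θ₁ ^ 2 ≠ θ₂ ^ 2) :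
    (Pi.single (.inr (.inl 0)) 1 + Pi.single (.inr (.inl 1)) 1 : DSVertex 2 l → ℂ) =
      symmCoeff θ₁ θ₂ • (symmVec 2 l θ₁ + symmVec 2 l (-θ₁)) +
        symmCoeff θ₂ θ₁ • (symmVec 2 l θ₂ + symmVec 2 l (-θ₂)) := by
  have h₁₂ : θ₁ ^ 2 - θ₂ ^ 2 ≠ 0 := sub_ne_zero.2 h
  have h₂₁ : θ₂ ^ 2 - θ₁ ^ 2 ≠ 0 := sub_ne_zero.2 h.symm
  refine DSVertex.funext ?_ ?_ (fun i => ?_) (fun j => ?_)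
  · simp [symmVec]
  · simp only [Pi.add_apply, Pi.smul_apply, smul_eq_mul, symmVec, neg_sq, symmCoeff,
      Pi.single_apply, reduceCtorEq, if_false]
    field_simp
    ring
  · have hsingle : (Pi.single (.inr (.inl 0)) 1 + Pi.single (.inr (.inl 1)) 1 :
        DSVertex 2 l → ℂ) (.inr (.inl i)) = 1 := by
      fin_cases i <;> simp
    rw [hsingle]
    simp only [Pi.add_apply, Pi.smul_apply, smul_eq_mul, symmVec, symmCoeff]
    field_simp
    ring
  · simp [symmVec, div_neg]

theorem qWalk_mulVec_single_add_single {l : ℕ} {θ₁ θ₂ : ℂ} (h₁ : θ₁ ≠ 0) (h₂ : θ₂ ≠ 0)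
    (hroot₁ : θ₁ ^ 4 + 2 * l = (l + 3) * θ₁ ^ 2) (hroot₂ : θ₂ ^ 4 + 2 * l = (l + 3) * θ₂ ^ 2)
    (h : θ₁ ^ 2 ≠ θ₂ ^ 2) (t : ℝ) :
    qWalk ((doubleStar 2 l).adjMatrix ℂ) t *ᵥ
        (Pi.single (.inr (.inl 0)) 1 + Pi.single (.inr (.inl 1)) 1) =
      symmCoeff θ₁ θ₂ •
          (cexp (I * t * θ₁) • symmVec 2 l θ₁ + cexp (I * t * (-θ₁)) • symmVec 2 l (-θ₁)) +
        symmCoeff θ₂ θ₁ •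
          (cexp (I * t * θ₂) • symmVec 2 l θ₂ + cexp (I * t * (-θ₂)) • symmVec 2 l (-θ₂)) := by
  rw [single_add_single_eq_symmVec h, mulVec_add, mulVec_smul, mulVec_smul,
    qWalk_mulVec_symmVec_add_symmVec_neg h₁ hroot₁, qWalk_mulVec_symmVec_add_symmVec_neg h₂ hroot₂]

theorem qWalk_doubleStar_mulVec_single (l : ℕ) (t : ℝ) :
    qWalk ((doubleStar 2 l).adjMatrix ℂ) t *ᵥ Pi.single (.inr (.inl 0)) 1 =
      (1 / 2 : ℂ) • (Pi.single (.inr (.inl 0)) 1 - Pi.single (.inr (.inl 1)) 1) +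
        (1 / 2 : ℂ) • (qWalk ((doubleStar 2 l).adjMatrix ℂ) t *ᵥ
          (Pi.single (.inr (.inl 0)) 1 + Pi.single (.inr (.inl 1)) 1)) := by
  have hfixed := qWalk_mulVec_of_mulVec_eq_smul (c := 0) (t := t)
    (by rw [zero_smul]; exact doubleStar_adjMatrix_mulVec_single_sub_single (k := 2) (l := l) 0 1)
  rw [mul_zero, exp_zero, one_smul] at hfixed
  rw [← hfixed, ← mulVec_smul, ← mulVec_smul, ← mulVec_add]
  congr 1
  module

theorem norm_qWalk_doubleStar_two_two_apply_le (t : ℝ) :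
    ‖(qWalk ((doubleStar 2 2).adjMatrix ℂ) t *ᵥ Pi.single (.inr (.inl 0)) 1) (.inr (.inl 1))‖
      ≤ 3 / 4 := by
  have hcos (θ : ℂ) : cexp (I * t * θ) + cexp (I * t * -θ) = 2 * cos (t * θ) := by
    rw [two_cos]; ring_nf
  have hβ₁ : symmCoeff (2 : ℝ) (1 : ℝ) = 1 / 6 := by norm_num [symmCoeff]
  have hβ₂ : symmCoeff (1 : ℝ) (2 : ℝ) = 1 / 3 := by norm_num [symmCoeff]
  have hentry : (qWalk ((doubleStar 2 2).adjMatrix ℂ) t *ᵥ Pi.single (.inr (.inl 0)) 1)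
      (.inr (.inl 1)) = ((-1 / 2 + Real.cos (t * 2) / 6 + Real.cos t / 3 : ℝ) : ℂ) := by
    rw [qWalk_doubleStar_mulVec_single, qWalk_mulVec_single_add_single (θ₁ := (2 : ℝ))
      (θ₂ := (1 : ℝ)) (by norm_num) (by norm_num) (by norm_num) (by norm_num) (by norm_num)]
    simp only [Pi.add_apply, Pi.smul_apply, Pi.sub_apply, smul_eq_mul, symmVec, hβ₁, hβ₂,
      Pi.single_eq_same, Pi.single_apply, Sum.inr.injEq, Sum.inl.injEq, one_ne_zero, if_false]
    have hcos₁ := hcos 1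
    rw [show (t : ℂ) * 1 = t from mul_one _] at hcos₁
    push_cast
    linear_combination (1 / 12 : ℂ) * hcos 2 + (1 / 6 : ℂ) * hcos₁
  rw [hentry, norm_real, Real.norm_eq_abs, abs_le, mul_comm, Real.cos_two_mul]
  constructor <;>
    nlinarith [Real.neg_one_le_cos t, Real.cos_le_one t, sq_nonneg (Real.cos t + 1 / 2)]

theorem isPGST_doubleStar_of_irrational {l : ℕ} {θ₁ θ₂ : ℝ} (h₁ : θ₁ ≠ 0) (h₂ : θ₂ ≠ 0)
    (hroot₁ : θ₁ ^ 4 + 2 * l = (l + 3) * θ₁ ^ 2) (hroot₂ : θ₂ ^ 4 + 2 * l = (l + 3) * θ₂ ^ 2)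
    (h : θ₁ ^ 2 ≠ θ₂ ^ 2) (hirr : Irrational (θ₂ / θ₁)) :
    IsPGST ((doubleStar 2 l).adjMatrix ℂ) (.inr (.inl 0)) (.inr (.inl 1)) := by
  have h' : (θ₁ : ℂ) ^ 2 ≠ (θ₂ : ℂ) ^ 2 := by exact_mod_cast h
  -- once `e^{itθ₁} = -1`, the distance to `-e_{u₂}` only depends on `z = e^{itθ₂}`
  let g (z : ℂ) : DSVertex 2 l → ℂ := (symmCoeff θ₂ θ₁ / 2) •
    ((1 + z) • symmVec 2 l θ₂ + (1 + z⁻¹) • symmVec 2 l (-θ₂))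
  have hg : ContinuousAt g (-1) := by fun_prop (disch := norm_num)
  have hg₀ : g (-1) = 0 := by simp [g]
  refine ⟨-1, by simp, fun ε hε => ?_⟩
  obtain ⟨δ, hδ, hgδ⟩ := Metric.continuousAt_iff.1 hg ε hε
  obtain ⟨t, ht₁, ht₂⟩ := exists_exp_eq_neg_one_and_norm_exp_add_one_lt h₁ hirr hδ
  have hneg (θ : ℝ) : cexp (I * t * -θ) = (cexp (I * t * θ))⁻¹ := by
    rw [← exp_neg, mul_neg]
  have hwalk : qWalk ((doubleStar 2 l).adjMatrix ℂ) t *ᵥ Pi.single (.inr (.inl 0)) 1 -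
      (-1 : ℂ) • Pi.single (.inr (.inl 1)) 1 = g (cexp (I * t * θ₂)) := by
    calc _ = (1 / 2 : ℂ) • (Pi.single (.inr (.inl 0)) 1 + Pi.single (.inr (.inl 1)) 1) +
          (1 / 2 : ℂ) • (qWalk ((doubleStar 2 l).adjMatrix ℂ) t *ᵥ
            (Pi.single (.inr (.inl 0)) 1 + Pi.single (.inr (.inl 1)) 1)) := by
          rw [qWalk_doubleStar_mulVec_single]; module
      _ = g (cexp (I * t * θ₂)) := by
          rw [qWalk_mulVec_single_add_single (by exact_mod_cast h₁) (by exact_mod_cast h₂)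
            (by exact_mod_cast hroot₁) (by exact_mod_cast hroot₂) h' t,
            single_add_single_eq_symmVec h', hneg, hneg, ht₁]
          module
  refine ⟨t, ?_⟩
  have := hgδ (x := cexp (I * t * θ₂)) (by rwa [dist_eq_norm, sub_neg_eq_add])
  rwa [hg₀, dist_zero_right, ← hwalk] at this

/-- in `S_{2,ℓ}` there is pretty good state transfer between the two pendant
vertices adjacent to the centre of degree three if and only if `ℓ ≠ 2`. -/
theorem pgst_S2l_iff (l : ℕ) (hl : 0 < l) :
    IsPGST ((doubleStar 2 l).adjMatrix ℂ)
        (Sum.inr (Sum.inl 0)) (Sum.inr (Sum.inl 1)) ↔ l ≠ 2 := by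
  refine ⟨?_, fun hl2 => ?_⟩
  · rintro hpgst rfl
    obtain ⟨t, ht⟩ := hpgst.exists_lt_norm_qWalk_mulVec_apply (ε := 1 / 4) (by norm_num)
    linarith [norm_qWalk_doubleStar_two_two_apply_le t]
  · obtain ⟨θ₁, θ₂, h₁, h₂, hroot₁, hroot₂, hne, hirr⟩ :=
      exists_roots_irrational_div_of_ne_two hl hl2
    exact isPGST_doubleStar_of_irrational h₁.ne' h₂.ne' hroot₁ hroot₂ hne hirr
end
end

section
/- Let k be a positive integer, let S_{k,k} be the symmetric double star graph with central vertices u and v, and let A be its adjacency matrix. Set α = (1+√(1+4k))/2 and β = k/(1+4k+√(1+4k)). Then for every real t, the (u,v) entry of exp(itA) equals i·((1−2β)·sin(αt) + 2β·sin((1−α)t)). -/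
open Matrix

noncomputable section

/-! Since `α² - α = k`, the adjacency matrix of `S_{k,k}` has eigenvectors constant on the two
leaf classes, with eigenvalues `α, 1 - α` (symmetric under swapping the two stars) and
`-α, α - 1` (antisymmetric). The indicator vector of `v` is an explicit combination of these four,
so `exp(itA) e_v` is explicit; in its `u`-coordinate the eigenvalues `±α` and `±(1 - α)` pair up
into sines, and `2α - 1 = √(1 + 4k)` turns their coefficients into `1 - 2β` and `2β`. -/

open NormedSpace

theorem Matrix.exp_smul_mulVec_of_mulVec_eq_smul {n : Type*} [Fintype n] [DecidableEq n]
    {A : Matrix n n ℂ} {x : n → ℂ} {μ : ℂ} (h : A *ᵥ x = μ • x) (c : ℂ) :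
    exp (c • A) *ᵥ x = Complex.exp (c * μ) • x := by
  -- any complete algebra norm will do; it only gives access to the exponential series
  let _ : NormedRing (Matrix n n ℂ) := Matrix.linftyOpNormedRing
  let _ : NormedAlgebra ℂ (Matrix n n ℂ) := Matrix.linftyOpNormedAlgebra
  have hpow (m : ℕ) : (c • A) ^ m *ᵥ x = (c * μ) ^ m • x := by
    induction m with
    | zero => simp
    | succ m ih => rw [pow_succ', ← mulVec_mulVec, ih, mulVec_smul, smul_mulVec, h, smul_smul,
        smul_smul, pow_succ, mul_assoc]
  have hseries := (exp_series_hasSum_exp' (𝕂 := ℂ) (c • A)).map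
    ((Matrix.mulVecBilin ℂ ℂ).flip x) (LinearMap.continuous_of_finiteDimensional _)
  have hscalar := (exp_series_hasSum_exp' (𝕂 := ℂ) (c * μ)).smul_const x
  rw [← Complex.exp_eq_exp_ℂ] at hscalar
  refine hseries.unique (hscalar.congr_fun fun m => ?_)
  simp [hpow, smul_smul]

section

variable {R : Type*}

def doubleStarVec (k l : ℕ) (a b p q : R) : DSVertex k l → R :=
  Sum.elim ![a, b] (Sum.elim (fun _ => p) (fun _ => q))

theorem smul_doubleStarVec [Mul R] (k l : ℕ) (c a b p q : R) :
    c • doubleStarVec k l a b p q = doubleStarVec k l (c * a) (c * b) (c * p) (c * q) := by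
  ext i
  rcases i with i | i | i <;> (try fin_cases i) <;> simp [doubleStarVec]

theorem doubleStar_adjMatrix_mulVec [NonAssocSemiring R] (k l : ℕ) (a b p q : R) :
    (doubleStar k l).adjMatrix R *ᵥ doubleStarVec k l a b p q =
      doubleStarVec k l (b + k * p) (a + l * q) a b := by
  ext i
  simp only [mulVec, dotProduct, Fintype.sum_sum_type, Fin.sum_univ_two,
    SimpleGraph.adjMatrix_apply]
  rcases i with i | i | i <;> (try fin_cases i) <;> simp [doubleStarVec, doubleStar]

theorem doubleStar_adjMatrix_mulVec_eigenvector_s6 [CommRing R] (k : ℕ) {μ ε : R}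
    (hε : ε ^ 2 = 1) (hμ : μ ^ 2 = ε * μ + k) :
    (doubleStar k k).adjMatrix R *ᵥ doubleStarVec k k μ (ε * μ) 1 ε =
      μ • doubleStarVec k k μ (ε * μ) 1 ε := by
  rw [doubleStar_adjMatrix_mulVec, smul_doubleStarVec]
  congr 1
  · linear_combination -hμ
  · linear_combination -ε * hμ - μ * hε
  · ring
  · ring

end

theorem doubleStar_exp_smul_adjMatrix_apply_centers (k : ℕ) {a : ℂ} (hk : (k : ℂ) = a ^ 2 - a)
    (ha : 2 * a - 1 ≠ 0) (c : ℂ) :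
    exp (c • (doubleStar k k).adjMatrix ℂ) (Sum.inl 0) (Sum.inl 1) =
      (a * Complex.sinh (c * a) + (a - 1) * Complex.sinh (c * (1 - a))) / (2 * a - 1) := by
  set x : ℂ → ℂ → DSVertex k k → ℂ := fun μ ε => doubleStarVec k k μ (ε * μ) 1 ε
  have hexp (μ ε : ℂ) (hε : ε ^ 2 = 1) (hμ : μ ^ 2 = ε * μ + k) :
      exp (c • (doubleStar k k).adjMatrix ℂ) *ᵥ x μ ε = Complex.exp (c * μ) • x μ ε :=
    Matrix.exp_smul_mulVec_of_mulVec_eq_smul (doubleStar_adjMatrix_mulVec_eigenvector_s6 k hε hμ) c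
  have hcomb : x a 1 - x (1 - a) 1 + x (-a) (-1) - x (a - 1) (-1) =
      (2 * (2 * a - 1)) • Pi.single (Sum.inl 1) 1 := by
    ext i
    rcases i with i | i | i <;> (try fin_cases i) <;> simp [x, doubleStarVec] <;> ring
  have hsingle : Pi.single (Sum.inl 1) 1 =
      (2 * (2 * a - 1))⁻¹ • (x a 1 - x (1 - a) 1 + x (-a) (-1) - x (a - 1) (-1)) := by
    rw [hcomb, inv_smul_smul₀ (mul_ne_zero two_ne_zero ha)]
  refine (congrFun (mulVec_single_one _ (Sum.inl 1)) (Sum.inl 0)).symm.trans ?_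
  rw [hsingle, mulVec_smul, mulVec_sub, mulVec_add, mulVec_sub,
    hexp a 1 (by ring) (by linear_combination -hk),
    hexp (1 - a) 1 (by ring) (by linear_combination -hk),
    hexp (-a) (-1) (by ring) (by linear_combination -hk),
    hexp (a - 1) (-1) (by ring) (by linear_combination -hk)]
  rw [show c * (a - 1) = -(c * (1 - a)) by ring, show c * -a = -(c * a) by ring]
  simp only [x, doubleStarVec, Pi.smul_apply, Pi.sub_apply, Pi.add_apply, Sum.elim_inl,
    cons_val_zero, smul_eq_mul, Complex.sinh]
  field_simp
  ring

theorem Skk_walk_entry_general (k : ℕ) (α β : ℝ)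
    (hα : α = (1 + Real.sqrt (1 + 4 * k)) / 2)
    (hβ : β = k / (1 + 4 * k + Real.sqrt (1 + 4 * k))) (t : ℝ) :
    qWalk ((doubleStar k k).adjMatrix ℂ) t (Sum.inl 0) (Sum.inl 1) =
      Complex.I *
        (((1 - 2 * β) * Real.sin (α * t) + 2 * β * Real.sin ((1 - α) * t) : ℝ) : ℂ) := by
  have hsqrt : Real.sqrt (1 + 4 * k) = 2 * α - 1 := by rw [hα]; ring
  have hsq : (2 * α - 1) ^ 2 = 1 + 4 * k := by rw [← hsqrt]; exact Real.sq_sqrt (by positivity)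
  have hpos : 0 < 2 * α - 1 := hsqrt ▸ Real.sqrt_pos.2 (by positivity)
  have hβα : 2 * β * (2 * α - 1) = α - 1 := by
    rw [hβ, hsqrt, ← hsq]
    field_simp
    linear_combination -hsq / 2
  have hk : (k : ℂ) = (α : ℂ) ^ 2 - α := by
    exact_mod_cast (by linear_combination -hsq / 4 : (k : ℝ) = α ^ 2 - α)
  have ha : 2 * (α : ℂ) - 1 ≠ 0 := by exact_mod_cast hpos.ne'
  have hβα' : 2 * (β : ℂ) * (2 * α - 1) = α - 1 := by exact_mod_cast hβα
  rw [qWalk, doubleStar_exp_smul_adjMatrix_apply_centers k hk ha,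
    show Complex.I * t * α = (α * t : ℝ) * Complex.I by push_cast; ring,
    show Complex.I * t * (1 - α) = ((1 - α) * t : ℝ) * Complex.I by push_cast; ring,
    Complex.sinh_mul_I, Complex.sinh_mul_I, ← Complex.ofReal_sin, ← Complex.ofReal_sin,
    div_eq_iff ha]
  push_cast
  linear_combination Complex.I * (Complex.sin (α * t) - Complex.sin ((1 - α) * t)) * hβα'

/-- the `(u,v)` entry of `exp(itA)` for the symmetric double star `S_{k,k}`,
where `u`, `v` are the central vertices, `α = (1+√(1+4k))/2` and `β = k/(1+4k+√(1+4k))`. -/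
theorem Skk_walk_entry (k : ℕ) (hk : 0 < k) (α β : ℝ)
    (hα : α = (1 + Real.sqrt (1 + 4 * k)) / 2)
    (hβ : β = k / (1 + 4 * k + Real.sqrt (1 + 4 * k))) (t : ℝ) :
    qWalk ((doubleStar k k).adjMatrix ℂ) t (Sum.inl 0) (Sum.inl 1) =
      Complex.I *
        (((1 - 2 * β) * Real.sin (α * t) + 2 * β * Real.sin ((1 - α) * t) : ℝ) : ℂ) :=
  Skk_walk_entry_general k α β hα hβ t
end
end

section
/- Let A be a real symmetric n×n matrix with spectral decomposition A = Σ_{r=1}^m θ_r E_r, where θ_1,…,θ_m are distinct real numbers and E_1,…,E_m are real symmetric matrices satisfying E_r² = E_r, E_r E_s = 0 for r ≠ s, and Σ_{r=1}^m E_r = I. Let Q be a real n×c matrix with QᵀQ = I_c, and suppose AQ = QB where B = QᵀAQ. Then B = Σ_{r=1}^m θ_r (QᵀE_rQ), each matrix QᵀE_rQ is symmetric and idempotent, (QᵀE_rQ)(QᵀE_sQ) = 0 for r ≠ s, and Σ_{r=1}^m QᵀE_rQ = I_c; consequently the nonzero matrices among the QᵀE_rQ are the idempotents in the spectral decomposition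 of B. -/
open Matrix Polynomial

noncomputable section

/-- if `A = Σ θ_r E_r` is a spectral decomposition of the real symmetric matrix
`A`, `QᵀQ = I` and `AQ = QB` with `B = QᵀAQ`, then `B = Σ θ_r (QᵀE_rQ)` where the matrices
`QᵀE_rQ` are symmetric idempotents with pairwise zero products summing to the identity;
consequently the nonzero ones among them are the idempotents in the spectral
decomposition of `B`. -/
theorem quotient_spectral_decomposition (n c m : ℕ)
    (A : Matrix (Fin n) (Fin n) ℝ) (hA : A.IsSymm)
    (θ : Fin m → ℝ) (E : Fin m → Matrix (Fin n) (Fin n) ℝ)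
    (hθ : Function.Injective θ)
    (hEsymm : ∀ r, (E r).IsSymm)
    (hEidem : ∀ r, E r * E r = E r)
    (hEorth : ∀ r s, r ≠ s → E r * E s = 0)
    (hEsum : ∑ r, E r = 1)
    (hAspec : A = ∑ r, θ r • E r)
    (Q : Matrix (Fin n) (Fin c) ℝ) (hQ : Qᵀ * Q = 1)
    (B : Matrix (Fin c) (Fin c) ℝ) (hB : B = Qᵀ * A * Q)
    (hAQ : A * Q = Q * B) :
    B = ∑ r, θ r • (Qᵀ * E r * Q) ∧
    (∀ r, (Qᵀ * E r * Q).IsSymm) ∧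
    (∀ r, (Qᵀ * E r * Q) * (Qᵀ * E r * Q) = Qᵀ * E r * Q) ∧
    (∀ r s, r ≠ s → (Qᵀ * E r * Q) * (Qᵀ * E s * Q) = 0) ∧
    (∑ r, Qᵀ * E r * Q = 1) := by
  -- powers of A in terms of the projections
  have hpow : ∀ k : ℕ, A ^ k = ∑ r, θ r ^ k • E r := by
    intro k
    induction k with
    | zero => simpa using hEsum.symm
    | succ k ih =>
      rw [pow_succ, ih, hAspec, Finset.sum_mul_sum]
      rw [Finset.sum_congr rfl (fun r _ => Finset.sum_eq_single r
        (fun s _ hs => by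
          rw [smul_mul_smul_comm, hEorth r s (Ne.symm hs)]
          · simp
          )
        (by simp))]
      · apply Finset.sum_congr rfl
        intro r _
        rw [smul_mul_smul_comm, hEidem, pow_succ, mul_comm]
  -- aeval of any polynomial at A
  have haev : ∀ p : ℝ[X], aeval A p = ∑ r, p.eval (θ r) • E r := by
    intro p
    induction p using Polynomial.induction_on' with
    | add p q hp hq => rw [map_add, hp, hq, ← Finset.sum_add_distrib]; simp [add_smul]
    | monomial k a => simp [aeval_monomial, hpow, Finset.smul_sum, smul_smul, Algebra.algebraMap_eq_smul_one, smul_mul_assoc, one_mul, mul_pow]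
  -- powers of A intertwine with powers of B
  have hpowQ : ∀ k : ℕ, A ^ k * Q = Q * B ^ k := by
    intro k
    induction k with
    | zero => simp
    | succ k ih =>
      rw [pow_succ, pow_succ, Matrix.mul_assoc, hAQ, ← Matrix.mul_assoc, ih, Matrix.mul_assoc]
  have haevQ : ∀ p : ℝ[X], (aeval A p) * Q = Q * (aeval B p) := by
    intro p
    induction p using Polynomial.induction_on' with
    | add p q hp hq => rw [map_add, map_add, Matrix.add_mul, Matrix.mul_add, hp, hq]
    | monomial k a =>
      simp only [aeval_monomial, Algebra.algebraMap_eq_smul_one, smul_mul_assoc, one_mul]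
      rw [Matrix.smul_mul, hpowQ, Matrix.mul_smul]
  -- the key lemma : E r * Q = Q * (Qᵀ * E r * Q)
  have key : ∀ r, E r * Q = Q * (Qᵀ * E r * Q) := by
    intro r
    set p := Lagrange.basis Finset.univ θ r with hp
    have hinj : Set.InjOn θ ↑(Finset.univ : Finset (Fin m)) := hθ.injOn
    have hEr : aeval A p = E r := by
      rw [haev, Finset.sum_eq_single r
        (fun s _ hs => by rw [Lagrange.eval_basis_of_ne (Ne.symm hs) (Finset.mem_univ s)]; simp)
        (by simp)]
      rw [Lagrange.eval_basis_self hinj (Finset.mem_univ r), one_smul]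
    have h1 : E r * Q = Q * aeval B p := by rw [← hEr, haevQ]
    have h2 : Qᵀ * E r * Q = aeval B p := by
      rw [Matrix.mul_assoc, h1, ← Matrix.mul_assoc, hQ, Matrix.one_mul]
    rw [h2, h1]
  refine ⟨?_, ?_, ?_, ?_, ?_⟩
  · rw [hB, hAspec, Matrix.mul_sum, Matrix.sum_mul]
    apply Finset.sum_congr rfl
    intro r _
    rw [Matrix.mul_smul, Matrix.smul_mul, Matrix.mul_assoc, ← Matrix.mul_assoc]
  · intro r
    unfold Matrix.IsSymm
    rw [transpose_mul, transpose_mul, transpose_transpose, (hEsymm r), Matrix.mul_assoc]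
  · intro r
    calc Qᵀ * E r * Q * (Qᵀ * E r * Q) = Qᵀ * E r * (Q * (Qᵀ * E r * Q)) := by
          rw [Matrix.mul_assoc]
      _ = Qᵀ * E r * (E r * Q) := by rw [← key r]
      _ = Qᵀ * (E r * E r) * Q := by
          rw [Matrix.mul_assoc (Qᵀ), ← Matrix.mul_assoc (E r), ← Matrix.mul_assoc]
      _ = Qᵀ * E r * Q := by rw [hEidem]
  · intro r s hrs
    calc Qᵀ * E r * Q * (Qᵀ * E s * Q) = Qᵀ * E r * (Q * (Qᵀ * E s * Q)) := by
          rw [Matrix.mul_assoc]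
      _ = Qᵀ * E r * (E s * Q) := by rw [← key s]
      _ = Qᵀ * (E r * E s) * Q := by
          rw [Matrix.mul_assoc (Qᵀ), ← Matrix.mul_assoc (E r), ← Matrix.mul_assoc]
      _ = 0 := by rw [hEorth r s hrs, Matrix.mul_zero, Matrix.zero_mul]
  · rw [← Matrix.sum_mul, ← Matrix.mul_sum, hEsum, Matrix.mul_one, hQ]
end
end

section
/- Let E be a real symmetric n×n matrix with E² = E, and let e_u, e_v be standard basis vectors of ℝⁿ (u ≠ v). Then (E e_v = E e_u or E e_v = −E e_u) if and only if E_{u,u} = E_{v,v} and (E_{u,v} = E_{u,u} or E_{u,v} = −E_{u,u}). -/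
open Matrix

noncomputable section

lemma col_key (n : ℕ) (E : Matrix (Fin n) (Fin n) ℝ)
    (hE : E.IsSymm) (hidem : E * E = E) (u v : Fin n) :
    ∑ i, E i u * E i v = E u v := by
  have : ∀ i, E i u = E u i := fun i => hE.apply u i
  calc ∑ i, E i u * E i v = ∑ i, E u i * E i v := by simp_rw [this]
    _ = (E * E) u v := by rw [Matrix.mul_apply]
    _ = E u v := by rw [hidem]

lemma mulVec_single_eq (n : ℕ) (E : Matrix (Fin n) (Fin n) ℝ) (u : Fin n) :
    E.mulVec (Pi.single u 1) = fun i => E i u := by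
  funext i
  simp [Matrix.mulVec, dotProduct, Pi.single_apply, mul_comm]

/-- for a real symmetric idempotent `E` and standard basis vectors `e_u`, `e_v`
(`u ≠ v`), one has `E e_v = ±E e_u` if and only if `E_{u,u} = E_{v,v}` and
`E_{u,v} = ±E_{u,u}`. -/
theorem strongly_cospectral_entries (n : ℕ) (E : Matrix (Fin n) (Fin n) ℝ)
    (hE : E.IsSymm) (hidem : E * E = E) (u v : Fin n) (huv : u ≠ v) :
    (E.mulVec (Pi.single v 1) = E.mulVec (Pi.single u 1) ∨
      E.mulVec (Pi.single v 1) = -(E.mulVec (Pi.single u 1))) ↔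
    (E u u = E v v ∧ (E u v = E u u ∨ E u v = -(E u u))) := by
  have hsym : ∀ i j, E i j = E j i := fun i j => hE.apply j i
  rw [mulVec_single_eq, mulVec_single_eq]
  constructor
  · rintro (h | h)
    · have hfun : ∀ i, E i v = E i u := fun i => congrFun h i
      have h1 := hfun u
      have h2 := hfun v
      have h3 := hsym v u
      constructor
      · linarith [h1, h2, h3]
      · exact Or.inl h1
    · have hfun : ∀ i, E i v = -E i u := fun i => congrFun h i
      have h1 := hfun u
      have h2 := hfun v
      have h3 := hsym v u
      constructor
      · linarith [h1, h2, h3]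
      · exact Or.inr h1
  · rintro ⟨hd, h | h⟩
    · left
      funext i
      have hz : ∑ i, (E i v - E i u) ^ 2 = 0 := by
        have e1 := col_key n E hE hidem v v
        have e2 := col_key n E hE hidem u v
        have e3 := col_key n E hE hidem u u
        have : ∑ i, (E i v - E i u) ^ 2
            = (∑ i, E i v * E i v) - 2 * (∑ i, E i u * E i v)
              + ∑ i, E i u * E i u := by
          rw [Finset.mul_sum, ← Finset.sum_sub_distrib, ← Finset.sum_add_distrib]
          apply Finset.sum_congr rfl
          intro i _; ring
        rw [this, e1, e2, e3, ← hd, h]; ring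
      have := (Finset.sum_eq_zero_iff_of_nonneg
        (fun i _ => sq_nonneg (E i v - E i u))).mp hz i (Finset.mem_univ i)
      have := pow_eq_zero_iff (n := 2) (by norm_num) |>.mp this
      linarith
    · right
      funext i
      have hz : ∑ i, (E i v + E i u) ^ 2 = 0 := by
        have e1 := col_key n E hE hidem v v
        have e2 := col_key n E hE hidem u v
        have e3 := col_key n E hE hidem u u
        have : ∑ i, (E i v + E i u) ^ 2
            = (∑ i, E i v * E i v) + 2 * (∑ i, E i u * E i v)
              + ∑ i, E i u * E i u := by
          rw [Finset.mul_sum, ← Finset.sum_add_distrib, ← Finset.sum_add_distrib]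
          apply Finset.sum_congr rfl
          intro i _; ring
        rw [this, e1, e2, e3, ← hd, h]; ring
      have := (Finset.sum_eq_zero_iff_of_nonneg
        (fun i _ => sq_nonneg (E i v + E i u))).mp hz i (Finset.mem_univ i)
      have := pow_eq_zero_iff (n := 2) (by norm_num) |>.mp this
      simp only [Pi.neg_apply]
      linarith
end
end

section
/- Let A be a real symmetric n×n matrix with spectral decomposition A = Σ_{r=1}^m θ_r E_r (θ_r distinct reals, E_r symmetric idempotents with pairwise zero products summing to I). Let Q be a real n×c matrix with QᵀQ = I_c and AQ = QB where B = QᵀAQ, and suppose there are indices j_u, j_v with Q e_{j_u} = e_u and Q e_{j_v} = e_v (so {u} and {v} are singleton cells). Then (for every r, E_r e_v = E_r e_u or E_r e_v = −E_r e_u) if and only if (for every r, (QᵀE_rQ) e_{j_v} = (QᵀE_rQ) e_{j_u} or (QᵀE_rQ) e_{j_v} = −(QᵀE_rQ) e_{j_u}). -/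
open Matrix

noncomputable section

/-- with `A = Σ θ_r E_r` a spectral decomposition, `QᵀQ = I`, `AQ = QB`,
`B = QᵀAQ`, and `Q e_{j_u} = e_u`, `Q e_{j_v} = e_v`, the vertices `u`, `v` are strongly
cospectral for `A` if and only if `j_u`, `j_v` are strongly cospectral for `B`. -/
theorem strongly_cospectral_quotient (n c m : ℕ)
    (A : Matrix (Fin n) (Fin n) ℝ) (hA : A.IsSymm)
    (θ : Fin m → ℝ) (E : Fin m → Matrix (Fin n) (Fin n) ℝ)
    (hθ : Function.Injective θ)
    (hEsymm : ∀ r, (E r).IsSymm)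
    (hEidem : ∀ r, E r * E r = E r)
    (hEorth : ∀ r s, r ≠ s → E r * E s = 0)
    (hEsum : ∑ r, E r = 1)
    (hAspec : A = ∑ r, θ r • E r)
    (Q : Matrix (Fin n) (Fin c) ℝ) (hQ : Qᵀ * Q = 1)
    (B : Matrix (Fin c) (Fin c) ℝ) (hB : B = Qᵀ * A * Q)
    (hAQ : A * Q = Q * B)
    (u v : Fin n) (ju jv : Fin c)
    (hju : Q.mulVec (Pi.single ju 1) = Pi.single u 1)
    (hjv : Q.mulVec (Pi.single jv 1) = Pi.single v 1) :
    (∀ r, (E r).mulVec (Pi.single v 1) = (E r).mulVec (Pi.single u 1) ∨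
          (E r).mulVec (Pi.single v 1) = -((E r).mulVec (Pi.single u 1))) ↔
    (∀ r, (Qᵀ * E r * Q).mulVec (Pi.single jv 1) = (Qᵀ * E r * Q).mulVec (Pi.single ju 1) ∨
          (Qᵀ * E r * Q).mulVec (Pi.single jv 1) =
            -((Qᵀ * E r * Q).mulVec (Pi.single ju 1))) := by
  -- basic spectral facts
  have hEA : ∀ r, E r * A = θ r • E r := by
    intro r
    rw [hAspec, Finset.mul_sum]
    rw [Finset.sum_eq_single r]
    · rw [mul_smul_comm, hEidem]
    · intro s _ hs
      rw [mul_smul_comm, hEorth r s (Ne.symm hs), smul_zero]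
    · simp
  have hAE : ∀ r, A * E r = θ r • E r := by
    intro r
    rw [hAspec, Finset.sum_mul]
    rw [Finset.sum_eq_single r]
    · rw [smul_mul_assoc, hEidem]
    · intro s _ hs
      rw [smul_mul_assoc, hEorth s r hs, smul_zero]
    · simp
  set P := Q * Qᵀ with hPdef
  have hBsymm : Bᵀ = B := by
    rw [hB]
    simp [Matrix.transpose_mul, Matrix.mul_assoc, hA.eq]
  have hPA : P * A = A * P := by
    have h1 : A * P = Q * B * Qᵀ := by
      rw [hPdef, ← Matrix.mul_assoc, hAQ]
    have h2 : P * A = Q * B * Qᵀ := by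
      calc P * A = (Aᵀ * Pᵀ)ᵀ := by simp
        _ = (A * P)ᵀ := by rw [hA.eq, hPdef]; simp
        _ = (Q * B * Qᵀ)ᵀ := by rw [h1]
        _ = Q * B * Qᵀ := by
            simp [Matrix.transpose_mul, Matrix.mul_assoc, hBsymm]
    rw [h1, h2]
  have hEPE : ∀ r s, r ≠ s → E r * P * E s = 0 := by
    intro r s hrs
    have h1 : E r * (A * P) * E s = θ r • (E r * P * E s) := by
      rw [← Matrix.mul_assoc, hEA r, smul_mul_assoc, smul_mul_assoc]
    have h2 : E r * (P * A) * E s = θ s • (E r * P * E s) := by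
      rw [Matrix.mul_assoc (E r), Matrix.mul_assoc P, hAE s, mul_smul_comm,
        mul_smul_comm]
      simp [Matrix.mul_assoc]
    have h3 : (θ r - θ s) • (E r * P * E s) = 0 := by
      rw [sub_smul, ← h1, ← h2, hPA, sub_self]
    rcases smul_eq_zero.mp h3 with h | h
    · exact absurd (hθ (sub_eq_zero.mp h)) hrs
    · exact h
  have hPE : ∀ r, P * E r = E r * P := by
    intro r
    have h1 : E r * P = E r * P * E r := by
      calc E r * P = E r * P * 1 := by rw [Matrix.mul_one]
        _ = E r * P * ∑ s, E s := by rw [hEsum]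
        _ = ∑ s, E r * P * E s := by rw [Finset.mul_sum]
        _ = E r * P * E r :=
            Finset.sum_eq_single r (fun s _ hs => hEPE r s (Ne.symm hs)) (by simp)
    have h2 : P * E r = E r * P * E r := by
      calc P * E r = 1 * (P * E r) := by rw [Matrix.one_mul]
        _ = (∑ s, E s) * (P * E r) := by rw [hEsum]
        _ = ∑ s, E s * (P * E r) := by rw [Finset.sum_mul]
        _ = E r * (P * E r) :=
            Finset.sum_eq_single r
              (fun s _ hs => by rw [← Matrix.mul_assoc]; exact hEPE s r hs) (by simp)
        _ = E r * P * E r := (Matrix.mul_assoc (E r) P (E r)).symm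
    rw [h1, h2]
  -- quotient idempotent applied to basis vectors
  have hkey : ∀ (x : Fin n) (jx : Fin c), Q.mulVec (Pi.single jx 1) = Pi.single x 1 →
      ∀ r, (Qᵀ * E r * Q).mulVec (Pi.single jx 1)
        = Qᵀ.mulVec ((E r).mulVec (Pi.single x 1)) := by
    intro x jx hjx r
    rw [← Matrix.mulVec_mulVec, ← Matrix.mulVec_mulVec, hjx]
  have hfix : ∀ (x : Fin n) (jx : Fin c), Q.mulVec (Pi.single jx 1) = Pi.single x 1 →
      ∀ r, Q.mulVec (Qᵀ.mulVec ((E r).mulVec (Pi.single x 1)))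
        = (E r).mulVec (Pi.single x 1) := by
    intro x jx hjx r
    have : Q.mulVec (Qᵀ.mulVec ((E r).mulVec (Pi.single x 1)))
        = (P * E r).mulVec (Pi.single x 1) := by
      rw [Matrix.mulVec_mulVec, Matrix.mulVec_mulVec, hPdef, Matrix.mul_assoc]
    rw [this, hPE r, ← Matrix.mulVec_mulVec]
    have hPx : P.mulVec (Pi.single x 1) = Pi.single x 1 := by
      rw [← hjx, Matrix.mulVec_mulVec, hPdef, Matrix.mul_assoc, hQ, Matrix.mul_one]
    rw [hPx]
  constructor
  · intro h r
    rw [hkey v jv hjv r, hkey u ju hju r]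
    rcases h r with h' | h'
    · left; rw [h']
    · right; rw [h', Matrix.mulVec_neg]
  · intro h r
    rcases h r with h' | h'
    · left
      rw [hkey v jv hjv r, hkey u ju hju r] at h'
      have := congrArg Q.mulVec h'
      rwa [hfix v jv hjv r, hfix u ju hju r] at this
    · right
      rw [hkey v jv hjv r, hkey u ju hju r] at h'
      have := congrArg Q.mulVec h'
      rwa [hfix v jv hjv r, Matrix.mulVec_neg, hfix u ju hju r] at this
end
end

section
/- Let A be a real symmetric n×n matrix, let B be a real symmetric c×c matrix, let u, v be indices for A and a, b indices for B, and suppose that (exp(itA))_{u,v} = (exp(itB))_{a,b} for every real t. Then there is pretty good state transfer from u to v relative to A if and only if there is pretty good state transfer from a to b relative to B. -/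
open Matrix

noncomputable section

/-! For a Hermitian symmetric `M`, `U(t) e_u` is the row `U(t)_u`, a unit vector. A unit vector
whose `v`-entry lies within `δ` of a unimodular `γ` lies within `√(2δ)` of `γ e_v`, so pretty good
state transfer from `u` to `v` is a property of the entry function `t ↦ U(t)_{uv}` alone. -/

theorem Matrix.IsSymm.isHermitian_map_ofReal {n : Type*} {A : Matrix n n ℝ} (hA : A.IsSymm) :
    (A.map Complex.ofReal).IsHermitian :=
  (isHermitian_iff_isSymm.mpr hA).map _ fun x => (Complex.conj_ofReal x).symm

variable {n : Type*} [DecidableEq n]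

theorem sub_smul_single_one_apply_self {R : Type*} [Ring R] (w : n → R) (γ : R) (v : n) :
    (w - γ • (Pi.single v 1 : n → R)) v = w v - γ := by
  rw [Pi.sub_apply, Pi.smul_apply, Pi.single_eq_same, smul_eq_mul, mul_one]

variable [Fintype n]

theorem qWalk_mem_unitaryGroup {M : Matrix n n ℂ} (hM : M.IsHermitian) (t : ℝ) :
    qWalk M t ∈ unitaryGroup n ℂ := by
  have hskew : ((Complex.I * t) • M)ᴴ = -((Complex.I * t) • M) := by
    simp [conjTranspose_smul, hM.eq, neg_smul]
  rw [mem_unitaryGroup_iff', star_eq_conjTranspose, qWalk, ← exp_conjTranspose, hskew,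
    ← exp_add_of_commute _ _ (Commute.refl ((Complex.I * t) • M)).neg_left, neg_add_cancel,
    NormedSpace.exp_zero]

theorem qWalk_isSymm {M : Matrix n n ℂ} (hM : M.IsSymm) (t : ℝ) : (qWalk M t).IsSymm :=
  (hM.smul _).exp

theorem sum_norm_sq_apply_eq_one_of_mem_unitaryGroup {𝕜 : Type*} [RCLike 𝕜] {U : Matrix n n 𝕜}
    (hU : U ∈ unitaryGroup n 𝕜) (i : n) : ∑ j, ‖U i j‖ ^ 2 = 1 := by
  have h := congr_fun₂ (mem_unitaryGroup_iff.mp hU) i i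
  simp only [mul_apply, star_apply, RCLike.star_def, RCLike.mul_conj, one_apply_eq] at h
  exact_mod_cast h

theorem norm_sub_smul_single_one_sq_le {𝕜 : Type*} [RCLike 𝕜] {w : n → 𝕜}
    (hw : ∑ i, ‖w i‖ ^ 2 ≤ 1) {γ : 𝕜} (hγ : ‖γ‖ = 1) (v : n) :
    ‖w - γ • Pi.single v 1‖ ^ 2 ≤ 2 * ‖w v - γ‖ := by
  have hwv : ‖w v‖ ^ 2 ≤ 1 :=
    (Finset.single_le_sum (fun i _ => sq_nonneg ‖w i‖) (Finset.mem_univ v)).trans hw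
  have hdist : 1 - ‖w v‖ ≤ ‖w v - γ‖ := by
    simpa [hγ] using norm_sub_norm_le γ (w v) |>.trans_eq (norm_sub_rev _ _)
  rw [← Real.le_sqrt (norm_nonneg _) (by positivity), pi_norm_le_iff_of_nonneg (by positivity)]
  intro j
  rw [Real.le_sqrt (norm_nonneg _) (by positivity)]
  by_cases hjv : j = v
  · subst hjv
    have hle_two : ‖w j - γ‖ ≤ 2 := by
      have htri := norm_sub_le (w j) γ
      nlinarith [norm_nonneg (w j)]
    rw [sub_smul_single_one_apply_self]
    nlinarith [norm_nonneg (w j - γ)]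
  · -- `‖w j‖² ≤ 1 - ‖w v‖² ≤ 2 (1 - ‖w v‖)`
    have hpair : ‖w j‖ ^ 2 + ‖w v‖ ^ 2 ≤ 1 :=
      (Finset.add_le_sum (fun i _ => sq_nonneg ‖w i‖) (Finset.mem_univ j) (Finset.mem_univ v)
        hjv).trans hw
    rw [Pi.sub_apply, Pi.smul_apply, Pi.single_eq_of_ne hjv, smul_zero, sub_zero]
    nlinarith [norm_nonneg (w v)]

theorem isPGST_iff_qWalk_apply {M : Matrix n n ℂ} (hH : M.IsHermitian) (hS : M.IsSymm)
    (u v : n) :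
    IsPGST M u v ↔ ∃ γ : ℂ, ‖γ‖ = 1 ∧ ∀ ε : ℝ, 0 < ε → ∃ t : ℝ, ‖qWalk M t u v - γ‖ < ε := by
  have hrow (t : ℝ) : qWalk M t *ᵥ Pi.single u 1 = (qWalk M t).row u := by
    rw [mulVec_single_one, col, (qWalk_isSymm hS t).eq, row]
  simp only [IsPGST, hrow]
  refine exists_congr fun γ => and_congr_right fun hγ => ⟨fun h ε hε => ?_, fun h ε hε => ?_⟩
  · obtain ⟨t, ht⟩ := h ε hε
    refine ⟨t, lt_of_le_of_lt ?_ ht⟩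
    have hentry := norm_le_pi_norm ((qWalk M t).row u - γ • Pi.single v 1) v
    rwa [sub_smul_single_one_apply_self, row_apply] at hentry
  · obtain ⟨t, ht⟩ := h (ε ^ 2 / 2) (by positivity)
    refine ⟨t, lt_of_pow_lt_pow_left₀ 2 hε.le ?_⟩
    calc ‖(qWalk M t).row u - γ • Pi.single v 1‖ ^ 2
        ≤ 2 * ‖qWalk M t u v - γ‖ :=
          norm_sub_smul_single_one_sq_le
            (sum_norm_sq_apply_eq_one_of_mem_unitaryGroup (qWalk_mem_unitaryGroup hH t) u).le hγ v
      _ < ε ^ 2 := by linarith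

/-- if `(exp(itA))_{u,v} = (exp(itB))_{a,b}` for all real `t`, where `A`, `B`
are real symmetric, then there is pretty good state transfer from `u` to `v` relative to `A`
iff there is pretty good state transfer from `a` to `b` relative to `B`. -/
theorem pgst_iff_of_entry_eq (n c : ℕ)
    (A : Matrix (Fin n) (Fin n) ℝ) (hA : A.IsSymm)
    (B : Matrix (Fin c) (Fin c) ℝ) (hB : B.IsSymm)
    (u v : Fin n) (a b : Fin c)
    (h : ∀ t : ℝ, qWalk (A.map Complex.ofReal) t u v = qWalk (B.map Complex.ofReal) t a b) :
    IsPGST (A.map Complex.ofReal) u v ↔ IsPGST (B.map Complex.ofReal) a b := by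
  rw [isPGST_iff_qWalk_apply hA.isHermitian_map_ofReal (hA.map _),
    isPGST_iff_qWalk_apply hB.isHermitian_map_ofReal (hB.map _)]
  simp only [h]
end
end

section
/- Let A be a real symmetric n×n matrix (viewed as a complex matrix) and let G = {exp(itA) : t ∈ ℝ}, a set of unitary matrices. For every ε > 0 there exists T > 0 such that for every matrix M in the topological closure of G and every real s, there is a t with 0 ≤ t ≤ T and ‖M − exp(i(s+t)A)‖ < ε. -/
/-!
The closure `K` of `{exp(itA)}` is a compact group inside the unitary group. In a compact group
`g⁻¹` lies in the closure of the forward powers `gᵏ`, `k ≥ 0`, so `K` is already the closure of the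
forward orbit `{exp(itA) : t ≥ 0}`, and compactness yields finitely many forward times, all `≤ T`,
approximating every point of `K`. For `M ∈ K` and `s ∈ ℝ` one approximates `M exp(-isA) ∈ K` and
multiplies back by `exp(isA)`; uniform continuity of multiplication on `K` keeps the error
independent of `s`.
-/

open Matrix

noncomputable section

open Set Filter Uniformity

namespace AddChar

theorem closure_image_Ici_zero {G : Type*} [Group G] [TopologicalSpace G] [CompactSpace G]
    [IsTopologicalGroup G] (u : AddChar ℝ G) : closure (u '' Ici 0) = closure (range u) := by
  refine (closure_mono (image_subset_range _ _)).antisymm (closure_minimal ?_ isClosed_closure)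
  rintro _ ⟨t, rfl⟩
  have hpow : closure (range ((u |t|) ^ · : ℕ → G)) ⊆ closure (u '' Ici 0) :=
    closure_mono <| range_subset_iff.2 fun k =>
      ⟨k • |t|, nsmul_nonneg (abs_nonneg t) k, u.map_nsmul_eq_pow k |t|⟩
  refine hpow ?_
  rw [← closure_range_zpow_eq_pow]
  refine subset_closure ⟨if 0 ≤ t then 1 else -1, ?_⟩
  split_ifs with ht
  · simp [abs_of_nonneg ht]
  · simp [abs_of_neg (not_le.1 ht), u.map_neg_eq_inv]

theorem exists_bounded_return_time {G : Type*} [Group G] [UniformSpace G] [CompactSpace G]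
    [IsTopologicalGroup G] (u : AddChar ℝ G) {V : SetRel G G} (hV : V ∈ 𝓤 G) :
    ∃ T : ℝ, 0 < T ∧ ∀ M ∈ closure (range u), ∀ s : ℝ,
      ∃ t : ℝ, 0 ≤ t ∧ t ≤ T ∧ (M, u (s + t)) ∈ V := by
  obtain ⟨W₀, hW₀, hmul⟩ := mem_uniformity_of_uniformContinuous_invariant
    (CompactSpace.uniformContinuous_of_continuous (continuous_mul (M := G))) hV
  obtain ⟨W, ⟨hW, hWopen⟩, hWW₀⟩ := uniformity_hasBasis_open.mem_iff.1 hW₀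
  have hcover : closure (range u) ⊆ ⋃ t ∈ Ici (0 : ℝ), (·, u t) ⁻¹' W := by
    rw [← u.closure_image_Ici_zero]
    intro M hM
    obtain ⟨_, hMt, t, ht, rfl⟩ := mem_closure_iff_nhds.1 hM _ (UniformSpace.ball_mem_nhds M hW)
    exact mem_biUnion ht hMt
  obtain ⟨S, hS0, hSfin, hS⟩ := isClosed_closure.isCompact.elim_finite_subcover_image
    (fun t _ => hWopen.preimage (continuous_id.prodMk continuous_const)) hcover
  obtain ⟨T, hT⟩ := hSfin.bddAbove
  refine ⟨max T 1, by positivity, fun M hM s => ?_⟩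
  have hMs : M * u (-s) ∈ closure (range u) :=
    map_mem_closure (f := (· * u (-s))) (continuous_mul_const _) hM fun _ ⟨t, ht⟩ =>
      ⟨t + -s, by rw [u.map_add_eq_mul, ht]⟩
  obtain ⟨t, htS, hMt⟩ := mem_iUnion₂.1 (hS hMs)
  refine ⟨t, hS0 htS, (hT htS).trans (le_max_left _ _), ?_⟩
  simpa [mul_assoc, ← u.map_add_eq_mul, add_comm t s] using hmul _ _ (u s) (hWW₀ hMt)

end AddChar

namespace Matrix

variable {m : Type*} [Fintype m] [DecidableEq m]

instance {𝕜 : Type*} [RCLike 𝕜] : CompactSpace (unitaryGroup m 𝕜) := by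
  have hsub : (unitaryGroup m 𝕜 : Set (Matrix m m 𝕜)) ⊆
      univ.pi fun _ => univ.pi fun _ => Metric.closedBall 0 1 :=
    fun U hU i _ j _ => mem_closedBall_zero_iff.2 (entry_norm_bound_of_unitary hU i j)
  refine isCompact_iff_compactSpace.1 <| IsCompact.of_isClosed_subset ?_ isClosed_unitary hsub
  exact isCompact_univ_pi fun _ => isCompact_univ_pi fun _ => isCompact_closedBall 0 1

theorem qWalk_zero (B : Matrix m m ℂ) : qWalk B 0 = 1 := by
  simp [qWalk]

theorem qWalk_add (B : Matrix m m ℂ) (s t : ℝ) : qWalk B (s + t) = qWalk B s * qWalk B t := by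
  have hcomm : Commute ((Complex.I * s) • B) ((Complex.I * t) • B) :=
    ((Commute.refl B).smul_left _).smul_right _
  rw [qWalk, qWalk, qWalk, ← exp_add_of_commute _ _ hcomm, ← add_smul, ← mul_add]
  push_cast
  rfl

theorem conjTranspose_qWalk {B : Matrix m m ℂ} (hB : B.IsHermitian) (t : ℝ) :
    (qWalk B t)ᴴ = qWalk B (-t) := by
  rw [qWalk, qWalk, ← exp_conjTranspose, conjTranspose_smul, hB.eq]
  congr 1
  simp

theorem qWalk_mem_unitaryGroup {B : Matrix m m ℂ} (hB : B.IsHermitian) (t : ℝ) :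
    qWalk B t ∈ unitaryGroup m ℂ := by
  rw [mem_unitaryGroup_iff, star_eq_conjTranspose, conjTranspose_qWalk hB, ← qWalk_add,
    add_neg_cancel, qWalk_zero]

def qWalkChar {B : Matrix m m ℂ} (hB : B.IsHermitian) : AddChar ℝ (unitaryGroup m ℂ) where
  toFun t := ⟨qWalk B t, qWalk_mem_unitaryGroup hB t⟩
  map_zero_eq_one' := Subtype.ext (qWalk_zero B)
  map_add_eq_mul' s t := Subtype.ext (qWalk_add B s t)

end Matrix

attribute [local instance] Matrix.normedAddCommGroup

/-- for `G = {exp(itA) : t ∈ ℝ}` with `A` real symmetric, for every `ε > 0`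
there is `T > 0` such that every element of the closure of `G` is within `ε` of some
`exp(i(s+t)A)` with `0 ≤ t ≤ T`, for any `s`. -/
theorem closure_recurrence (n : ℕ) (A : Matrix (Fin n) (Fin n) ℝ) (hA : A.IsSymm)
    (ε : ℝ) (hε : 0 < ε) :
    ∃ T : ℝ, 0 < T ∧
      ∀ M ∈ closure (Set.range (fun t : ℝ => qWalk (A.map Complex.ofReal) t)),
        ∀ s : ℝ, ∃ t : ℝ, 0 ≤ t ∧ t ≤ T ∧
          ‖M - qWalk (A.map Complex.ofReal) (s + t)‖ < ε := by
  have hB : (A.map Complex.ofReal).IsHermitian :=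
    (isHermitian_iff_isSymm.2 hA).map _ fun _ => by simp
  have hV : {p : unitaryGroup (Fin n) ℂ × unitaryGroup (Fin n) ℂ |
      dist (p.1 : Matrix (Fin n) (Fin n) ℂ) p.2 < ε} ∈ 𝓤 _ := by
    rw [uniformity_subtype]
    exact preimage_mem_comap (Metric.dist_mem_uniformity hε)
  obtain ⟨T, hT, hreturn⟩ := (qWalkChar hB).exists_bounded_return_time hV
  refine ⟨T, hT, ?_⟩
  have hrange : Set.range (fun t : ℝ => qWalk (A.map Complex.ofReal) t) =
      Subtype.val '' Set.range (qWalkChar hB) := range_comp Subtype.val (qWalkChar hB)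
  rw [hrange, isClosed_unitary.isClosedEmbedding_subtypeVal.closure_image_eq]
  rintro _ ⟨M, hM, rfl⟩ s
  simp only [← dist_eq_norm]
  exact hreturn M hM s
end
end

section
/- Let ℓ be a positive integer with ℓ ≠ 2, and set θ₂ = (1/2)·√(2ℓ+6+2√(ℓ²−2ℓ+9)) and θ₄ = (1/2)·√(2ℓ+6−2√(ℓ²−2ℓ+9)). Then the real number θ₂/θ₄ is irrational. -/
/-- for a positive integer `ℓ ≠ 2`, the ratio `θ₂/θ₄` of the two positive
eigenvalues of the symmetrized quotient of `S_{2,ℓ}` is irrational. -/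
theorem theta_ratio_irrational (l : ℕ) (hl : 0 < l) (hl2 : l ≠ 2) :
    Irrational
      ((1 / 2 * Real.sqrt (2 * l + 6 + 2 * Real.sqrt ((l : ℝ) ^ 2 - 2 * l + 9))) /
        (1 / 2 * Real.sqrt (2 * l + 6 - 2 * Real.sqrt ((l : ℝ) ^ 2 - 2 * l + 9)))) := by
  have hl1 : (1:ℝ) ≤ (l:ℝ) := by exact_mod_cast hl
  -- the inner sqrt is irrational
  have hDcast : ((l:ℝ)^2 - 2 * l + 9) = (((l-1)^2 + 8 : ℕ) : ℝ) := by
    have : ((l - 1 : ℕ) : ℝ) = (l:ℝ) - 1 := by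
      push_cast [Nat.cast_sub hl]; ring
    push_cast [this]; ring
  have hns : ¬ IsSquare ((l-1)^2 + 8) := by
    rintro ⟨m, hm⟩
    obtain ⟨k, rfl⟩ := Nat.exists_eq_succ_of_ne_zero hl.ne'
    simp only [Nat.succ_sub_one] at hm
    have hk2 : k + 1 ≠ 2 := hl2
    have hmu : m ≤ k + 3 := by nlinarith
    have hml : k + 1 ≤ m := by nlinarith
    have : m = k + 1 ∨ m = k + 2 ∨ m = k + 3 := by omega
    rcases this with rfl | rfl | rfl
    · have h : 2 * k + 1 = 8 := by nlinarith
      omega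
    · have h : 4 * k + 4 = 8 := by nlinarith
      omega
    · have h : 6 * k + 9 = 8 := by nlinarith
      omega
  have hirr : Irrational (Real.sqrt ((l:ℝ)^2 - 2 * l + 9)) := by
    rw [hDcast]; exact irrational_sqrt_natCast_iff.mpr hns
  set s : ℝ := Real.sqrt ((l:ℝ)^2 - 2 * l + 9) with hs_def
  have hDnn : (0:ℝ) ≤ (l:ℝ)^2 - 2 * l + 9 := by nlinarith
  have hs0 : 0 ≤ s := Real.sqrt_nonneg _
  have hs2 : s ^ 2 = (l:ℝ)^2 - 2 * l + 9 := Real.sq_sqrt hDnn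
  have hslt : s < (l:ℝ) + 3 := by
    have h1 : s^2 < ((l:ℝ) + 3)^2 := by rw [hs2]; nlinarith
    nlinarith
  have hpos4 : (0:ℝ) < 2 * l + 6 - 2 * s := by nlinarith
  have hposd : (0:ℝ) < Real.sqrt (2 * l + 6 - 2 * s) := Real.sqrt_pos.mpr hpos4
  have hnn2 : (0:ℝ) ≤ 2 * l + 6 + 2 * s := by nlinarith
  rw [show (1 / 2 * Real.sqrt (2 * l + 6 + 2 * s)) / (1 / 2 * Real.sqrt (2 * l + 6 - 2 * s))
      = Real.sqrt (2 * l + 6 + 2 * s) / Real.sqrt (2 * l + 6 - 2 * s) by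
    field_simp]
  intro ⟨q, hq⟩
  apply hirr
  -- square the equation
  have hsq : (q:ℝ)^2 * (2 * l + 6 - 2 * s) = 2 * l + 6 + 2 * s := by
    have h2 : (q:ℝ)^2 = (2 * l + 6 + 2 * s) / (2 * l + 6 - 2 * s) := by
      rw [hq, div_pow, Real.sq_sqrt hnn2, Real.sq_sqrt hpos4.le]
    rw [h2, div_mul_cancel₀ _ (ne_of_gt hpos4)]
  have hq2pos : (0:ℝ) < (q:ℝ)^2 + 1 := by positivity
  refine ⟨(2 * l + 6) * (q^2 - 1) / (2 * (q^2 + 1)), ?_⟩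
  have hq2pos' : ((q:ℚ)^2 + 1) ≠ 0 := by positivity
  push_cast
  field_simp
  nlinarith [hsq]
end

section
/- Let k be a positive integer and let B be the real 4×4 matrix with rows (0, √k, 0, 0), (√k, 0, 1, 0), (0, 1, 0, √k), (0, 0, √k, 0). Then the characteristic polynomial of B equals (x² − x − k)(x² + x − k); equivalently, the eigenvalues of B are α, −α, α−1 and 1−α, where α = (1+√(1+4k))/2. -/
open Matrix Polynomial

/-!
`B` is the adjacency matrix of a path on four vertices with edge weights `√k, 1, √k`; expanding
the determinant gives `X⁴ - (2k + 1)X² + k² = (X² - k)² - X²`. Since `α² = α + k`, the two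
quadratic factors split as `(X - α)(X - (1 - α))` and `(X + α)(X - (α - 1))`.
-/

theorem charpoly_weightedPath_four {R : Type*} [CommRing R] (a b c : R) :
    (!![0, a, 0, 0; a, 0, b, 0; 0, b, 0, c; 0, 0, c, 0] : Matrix (Fin 4) (Fin 4) R).charpoly =
      X ^ 4 - C (a ^ 2 + b ^ 2 + c ^ 2) * X ^ 2 + C (a ^ 2 * c ^ 2) := by
  simp only [charpoly, det_succ_row_zero, Fin.sum_univ_succ]
  simp [Fin.succAbove, charmatrix_apply, submatrix]
  ring

theorem X_sq_sub_X_sub_C_eq_mul {R : Type*} [CommRing R] {k α : R} (hα : α ^ 2 = α + k) :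
    (X ^ 2 - X - C k : R[X]) = (X - C α) * (X - C (1 - α)) := by
  rw [eq_sub_of_add_eq' hα.symm]
  simp only [map_sub, map_pow, C_1]
  ring

theorem X_sq_add_X_sub_C_eq_mul {R : Type*} [CommRing R] {k α : R} (hα : α ^ 2 = α + k) :
    (X ^ 2 + X - C k : R[X]) = (X - C (-α)) * (X - C (α - 1)) := by
  rw [eq_sub_of_add_eq' hα.symm]
  simp only [map_sub, map_neg, map_pow, C_1]
  ring

theorem charpoly_Skk_quotient_general (k : ℕ)
    (B : Matrix (Fin 4) (Fin 4) ℝ)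
    (hB : B = !![0, Real.sqrt k, 0, 0;
                 Real.sqrt k, 0, 1, 0;
                 0, 1, 0, Real.sqrt k;
                 0, 0, Real.sqrt k, 0])
    (α : ℝ) (hα : α = (1 + Real.sqrt (1 + 4 * k)) / 2) :
    B.charpoly = (X ^ 2 - X - C (k : ℝ)) * (X ^ 2 + X - C (k : ℝ)) ∧
    spectrum ℝ B = {α, -α, α - 1, 1 - α} := by
  have hcharpoly : B.charpoly = (X ^ 2 - X - C (k : ℝ)) * (X ^ 2 + X - C (k : ℝ)) := by
    rw [hB, charpoly_weightedPath_four, Real.sq_sqrt k.cast_nonneg]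
    simp only [one_pow, map_add, map_mul, map_one]
    ring
  have hα_sq : α ^ 2 = α + k := by
    have := Real.sq_sqrt (by positivity : (0 : ℝ) ≤ 1 + 4 * k)
    rw [hα]
    linear_combination this / 4
  refine ⟨hcharpoly, Set.ext fun μ => ?_⟩
  rw [mem_spectrum_iff_isRoot_charpoly, hcharpoly, X_sq_sub_X_sub_C_eq_mul hα_sq,
    X_sq_add_X_sub_C_eq_mul hα_sq]
  simp only [IsRoot.def, eval_mul, eval_sub, eval_X, eval_C, mul_eq_zero, sub_eq_zero,
    Set.mem_insert_iff, Set.mem_singleton_iff]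
  constructor
  · rintro ((h | h) | h | h) <;> simp only [h, true_or, or_true]
  · rintro (h | h | h | h) <;> simp only [h, true_or, or_true]

/-- the characteristic polynomial of the symmetrized quotient matrix of
`S_{k,k}` is `(x² − x − k)(x² + x − k)`; equivalently its eigenvalues are
`α, −α, α−1, 1−α` with `α = (1+√(1+4k))/2`. -/
theorem charpoly_Skk_quotient (k : ℕ) (hk : 0 < k)
    (B : Matrix (Fin 4) (Fin 4) ℝ)
    (hB : B = !![0, Real.sqrt k, 0, 0;
                 Real.sqrt k, 0, 1, 0;
                 0, 1, 0, Real.sqrt k;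
                 0, 0, Real.sqrt k, 0])
    (α : ℝ) (hα : α = (1 + Real.sqrt (1 + 4 * k)) / 2) :
    B.charpoly = (X ^ 2 - X - C (k : ℝ)) * (X ^ 2 + X - C (k : ℝ)) ∧
    spectrum ℝ B = {α, -α, α - 1, 1 - α} :=
  charpoly_Skk_quotient_general k B hB α hα
end

section
/- Let k be a positive integer. Then there do not exist a real number t and integers m, n such that ((1+√(1+4k))/2)·t = π/2 + 2mπ and ((1−√(1+4k))/2)·t = π/2 + 2nπ. -/
/-- there are no real `t` and integers `m`, `n` with
`((1+√(1+4k))/2)·t = π/2 + 2mπ` and `((1−√(1+4k))/2)·t = π/2 + 2nπ`. -/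
theorem no_simultaneous_times (k : ℕ) (hk : 0 < k) :
    ¬ ∃ (t : ℝ) (m n : ℤ),
        ((1 + Real.sqrt (1 + 4 * k)) / 2) * t = Real.pi / 2 + 2 * m * Real.pi ∧
        ((1 - Real.sqrt (1 + 4 * k)) / 2) * t = Real.pi / 2 + 2 * n * Real.pi := by
  rintro ⟨t, m, n, h1, h2⟩
  set r := Real.sqrt (1 + 4 * k) with hrdef
  have hr2 : r ^ 2 = 1 + 4 * (k : ℝ) := Real.sq_sqrt (by positivity)
  have hsum : t = (1 + 2 * ((m : ℝ) + n)) * Real.pi := by linear_combination h1 + h2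
  have hdiff : r * t = 2 * ((m : ℝ) - n) * Real.pi := by linear_combination h1 - h2
  rw [hsum] at hdiff
  have key : r * (1 + 2 * ((m : ℝ) + n)) = 2 * ((m : ℝ) - n) :=
    mul_right_cancel₀ Real.pi_ne_zero (by linear_combination hdiff)
  have hsq : (1 + 4 * (k : ℝ)) * (1 + 2 * ((m : ℝ) + n)) ^ 2 = (2 * ((m : ℝ) - n)) ^ 2 := by
    linear_combination (-(1 + 2 * ((m : ℝ) + n)) ^ 2) * hr2 +
      (r * (1 + 2 * ((m : ℝ) + n)) + 2 * ((m : ℝ) - n)) * key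
  have hz : (1 + 4 * (k : ℤ)) * (1 + 2 * (m + n)) ^ 2 = (2 * (m - n)) ^ 2 := by
    exact_mod_cast hsq
  have hodd : Odd ((1 + 4 * (k : ℤ)) * (1 + 2 * (m + n)) ^ 2) :=
    Odd.mul ⟨2 * k, by ring⟩ (Odd.pow ⟨m + n, by ring⟩)
  rw [hz] at hodd
  obtain ⟨c, hc⟩ := hodd
  have h4 : (2 * ((m : ℤ) - n)) ^ 2 = 4 * (m - n) ^ 2 := by ring
  rw [h4] at hc
  generalize (m - n : ℤ) ^ 2 = w at hc
  omega
end
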